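/- arXiv:1812.06324 — 6 statements merged into one kernel-verified Lean document; each statement's English description precedes it below -/
import Mathlib

section
/- Let n be a positive odd integer. Then, as polynomials in q, the q-shifted factorial product (q^{1-n};q^2)_{(n-1)/2} * (q^{1+n};q^2)_{(n-1)/2} is congruent to ((q;q^2)_{(n-1)/2})^2 modulo Phi_n(q)^2, where Phi_n is the n-th cyclotomic polynomial. -/
/-!
Write `n = k + 1` with `k = 2m`. Multiplying by `q^{km}` clears the negative powers, since
`q^k (1 - q^{-k} q^{2j}) = q^k - q^{2j}`; both sides become products of `m` factors that agree
factor by factor modulo `(q^n - 1)^2`. As `q^n - 1` is coprime to `q`, the numerator of the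
difference is divisible by `(q^n - 1)^2`, hence by `Φ_n(q)^2`.
-/

open Finset Polynomial

/-- The `q`-shifted factorial `(a;q)_k`. -/
noncomputable def qp {F : Type*} [Field F] (a q : F) (k : ℕ) : F :=
  ∏ j ∈ Finset.range k, (1 - a * q ^ j)

/-- The `q`-integer `[m]` as a rational function. -/
noncomputable def qint (m : ℕ) : RatFunc ℚ :=
  ∑ i ∈ Finset.range m, RatFunc.X ^ i

/-- The `q`-integer `[m]` as a polynomial. -/
noncomputable def qnat (m : ℕ) : Polynomial ℚ :=
  ∑ i ∈ Finset.range m, Polynomial.X ^ i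

/-- The `q`-binomial coefficient as a rational function. -/
noncomputable def qbin (n k : ℕ) : RatFunc ℚ :=
  qp RatFunc.X RatFunc.X n / (qp RatFunc.X RatFunc.X k * qp RatFunc.X RatFunc.X (n - k))

theorem Finset.dvd_prod_sub_prod {ι R : Type*} [CommRing R] (s : Finset ι) {d : R}
    {f g : ι → R} (h : ∀ i ∈ s, d ∣ f i - g i) : d ∣ ∏ i ∈ s, f i - ∏ i ∈ s, g i := by
  simp_rw [← Ideal.mem_span_singleton, ← Ideal.Quotient.eq] at h ⊢
  simpa only [map_prod] using Finset.prod_congr rfl h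

theorem isCoprime_pow_succ_sub_one_self {R : Type*} [CommRing R] (x : R) (k : ℕ) :
    IsCoprime (x ^ (k + 1) - 1) x :=
  ⟨-1, x ^ k, by ring⟩

theorem RatFunc.dvd_num_of_algebraMap_mul_eq {K : Type*} [Field K] {r : RatFunc K}
    {d p P : K[X]} (hdp : IsCoprime d p) (hdP : d ∣ P)
    (h : algebraMap K[X] (RatFunc K) p * r = algebraMap K[X] (RatFunc K) P) : d ∣ r.num := by
  have hnum : algebraMap K[X] (RatFunc K) r.num = r * algebraMap K[X] (RatFunc K) r.denom :=
    (div_eq_iff (RatFunc.algebraMap_ne_zero r.denom_ne_zero)).mp (RatFunc.num_div_denom r)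
  have hcross : r.num * p = P * r.denom := by
    apply RatFunc.algebraMap_injective K
    rw [map_mul, map_mul, hnum, ← h]
    ring
  exact hdp.dvd_of_dvd_mul_right (hcross ▸ hdP.mul_right _)

/-- Factor by factor, the two sides differ by `-a (x^{k+1} - 1)^2`. -/
theorem pow_succ_sub_one_sq_dvd_prod_sub_prod {ι R : Type*} [CommRing R] (s : Finset ι)
    (x : R) (a : ι → R) (k : ℕ) :
    (x ^ (k + 1) - 1) ^ 2 ∣
      ∏ i ∈ s, (x ^ k - a i) * (1 - x ^ (k + 2) * a i) - ∏ i ∈ s, x ^ k * (1 - x * a i) ^ 2 :=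
  s.dvd_prod_sub_prod fun i _ => ⟨-a i, by ring⟩

theorem pow_mul_qp_zpow_neg {F : Type*} [Field F] {x : F} (hx : x ≠ 0) (q : F) (k m : ℕ) :
    x ^ (k * m) * qp (x ^ (-(k : ℤ))) q m = ∏ j ∈ range m, (x ^ k - q ^ j) := by
  rw [qp, pow_mul, pow_eq_prod_const (x ^ k), ← prod_mul_distrib]
  refine prod_congr rfl fun j _ => ?_
  rw [mul_sub, mul_one, ← mul_assoc, zpow_neg, zpow_natCast, mul_inv_cancel₀ (pow_ne_zero k hx),
    one_mul]

theorem pow_mul_qp_sq {F : Type*} [Field F] (x q : F) (k m : ℕ) :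
    x ^ (k * m) * qp x q m ^ 2 = ∏ j ∈ range m, x ^ k * (1 - x * q ^ j) ^ 2 := by
  rw [qp, ← prod_pow, pow_mul, pow_eq_prod_const (x ^ k), ← prod_mul_distrib]

theorem stmt1_general (n : ℕ) (hodd : Odd n) :
    (Polynomial.cyclotomic n ℚ) ^ 2 ∣
      (qp (RatFunc.X ^ ((1 : ℤ) - (n : ℤ))) (RatFunc.X ^ 2) ((n - 1) / 2) *
        qp (RatFunc.X ^ (1 + n)) (RatFunc.X ^ 2) ((n - 1) / 2) -
        (qp RatFunc.X (RatFunc.X ^ 2) ((n - 1) / 2)) ^ 2).num := by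
  obtain ⟨m, rfl⟩ := hodd
  set k := 2 * m
  have hm : (k + 1 - 1) / 2 = m := by omega
  have hexp : (1 : ℤ) - ((k + 1 : ℕ) : ℤ) = -(k : ℤ) := by push_cast; ring
  rw [hm, hexp, show 1 + (k + 1) = k + 2 by ring]
  refine (pow_dvd_pow_of_dvd (cyclotomic.dvd_X_pow_sub_one _ ℚ) 2).trans <|
    RatFunc.dvd_num_of_algebraMap_mul_eq (p := X ^ (k * m))
      (isCoprime_pow_succ_sub_one_self X k).pow
      (pow_succ_sub_one_sq_dvd_prod_sub_prod (range m) X (fun j => (X ^ 2) ^ j) k) ?_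
  set x : RatFunc ℚ := RatFunc.X
  calc algebraMap ℚ[X] (RatFunc ℚ) (X ^ (k * m)) *
        (qp (x ^ (-(k : ℤ))) (x ^ 2) m * qp (x ^ (k + 2)) (x ^ 2) m - qp x (x ^ 2) m ^ 2)
      = x ^ (k * m) * qp (x ^ (-(k : ℤ))) (x ^ 2) m * qp (x ^ (k + 2)) (x ^ 2) m -
          x ^ (k * m) * qp x (x ^ 2) m ^ 2 := by
        rw [map_pow, RatFunc.algebraMap_X]; ring
    _ = ∏ j ∈ range m, (x ^ k - (x ^ 2) ^ j) * (1 - x ^ (k + 2) * (x ^ 2) ^ j) -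
          ∏ j ∈ range m, x ^ k * (1 - x * (x ^ 2) ^ j) ^ 2 := by
        rw [pow_mul_qp_zpow_neg RatFunc.X_ne_zero, pow_mul_qp_sq, qp, ← prod_mul_distrib]
    _ = _ := by
        simp only [x, map_sub, map_prod, map_mul, map_pow, map_one, RatFunc.algebraMap_X]

/-- for odd `n`,
    `(q^{1-n};q^2)_{(n-1)/2} (q^{1+n};q^2)_{(n-1)/2} ≡ (q;q^2)_{(n-1)/2}^2 mod Φ_n(q)^2`. -/
theorem stmt1 (n : ℕ) (hn : 0 < n) (hodd : Odd n) :
    (Polynomial.cyclotomic n ℚ) ^ 2 ∣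
      (qp (RatFunc.X ^ ((1 : ℤ) - (n : ℤ))) (RatFunc.X ^ 2) ((n - 1) / 2) *
        qp (RatFunc.X ^ (1 + n)) (RatFunc.X ^ 2) ((n - 1) / 2) -
        (qp RatFunc.X (RatFunc.X ^ 2) ((n - 1) / 2)) ^ 2).num :=
  stmt1_general n hodd
end

section
/- Let n be a positive odd integer and let 0 <= k <= (n-1)/2. Then the rational function (aq;q^2)_{(n-1)/2-k} / (q^2/a;q^2)_{(n-1)/2-k} is congruent to (-a)^{(n-1)/2-2k} * ((aq;q^2)_k / (q^2/a;q^2)_k) * q^{(n-1)^2/4 + k} modulo Phi_n(q), i.e., the numerator of the difference (as a reduced rational function in a and q) is divisible by Phi_n(q) in Z[a,q]. -/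
open Finset Polynomial

/-!
Write `n = 2m + 1` with `m = k + d`, and let `A_t = (aq;q²)_t` and
`B_t = a^t (q²/a;q²)_t = ∏_{j<t} (a - q^{2j+2})`. Clearing denominators, the difference equals
`(-1)^k a^d N / (B_d B_k)` with `N = (-1)^k A_d B_k - (-1)^d q^{m²+k} A_k B_d`.
If `q^n = 1`, then `1 - a q^{2j+1} = -q^{2j+1} (a - q^{2(m-j)})`, so `A_t` is, up to `(-1)^t q^{t²}`,
the product of the top `t` factors of `B_m`; hence `A_t B_{m-t} = (-1)^t q^{t²} B_m`, and since
`k² + m² + k ≡ d² (mod n)` this makes `N` vanish. So `q^n - 1` divides `N`, while each factor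
`a - q^{2j+2}` of the denominator is coprime to `q^n - 1` because `a^n ≠ 1`.
-/

section Products

variable {R : Type*} [CommRing R]

-- `qpOdd a x t = (a x; x²)_t`, and `qpEven a x t = a^t (x²/a; x²)_t`, which is a polynomial.
noncomputable def qpOdd (a x : R) (t : ℕ) : R :=
  ∏ j ∈ range t, (1 - a * x ^ (2 * j + 1))

noncomputable def qpEven (a x : R) (t : ℕ) : R :=
  ∏ j ∈ range t, (a - x ^ (2 * j + 2))

theorem map_qpOdd {S : Type*} [CommRing S] (f : R →+* S) (a x : R) (t : ℕ) :
    f (qpOdd a x t) = qpOdd (f a) (f x) t := by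
  simp [qpOdd, map_prod]

theorem map_qpEven {S : Type*} [CommRing S] (f : R →+* S) (a x : R) (t : ℕ) :
    f (qpEven a x t) = qpEven (f a) (f x) t := by
  simp [qpEven, map_prod]

theorem prod_range_neg_pow_odd (x : R) (t : ℕ) :
    ∏ j ∈ range t, (-x ^ (2 * j + 1)) = (-1) ^ t * x ^ (t ^ 2) := by
  induction t with
  | zero => simp
  | succ t ih => rw [prod_range_succ, ih]; ring

theorem qpOdd_mul_qpEven {a x : R} {t s : ℕ} (hx : x ^ (2 * (t + s) + 1) = 1) :
    qpOdd a x t * qpEven a x s = (-1) ^ t * x ^ (t ^ 2) * qpEven a x (t + s) := by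
  have hfactor : ∀ j ∈ range t, 1 - a * x ^ (2 * j + 1)
      = -x ^ (2 * j + 1) * (a - x ^ (2 * (s + (t - 1 - j)) + 2)) := by
    intro j hj
    have hj : j < t := mem_range.mp hj
    have hinv : x ^ (2 * j + 1) * x ^ (2 * (s + (t - 1 - j)) + 2) = 1 := by
      rw [← pow_add, ← hx]; congr 1; omega
    linear_combination -hinv
  rw [qpOdd, prod_congr rfl hfactor, prod_mul_distrib, prod_range_neg_pow_odd,
    prod_range_reflect (fun j ↦ a - x ^ (2 * (s + j) + 2)) t, qpEven, qpEven, add_comm t s,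
    prod_range_add]
  ring

theorem neg_one_pow_mul_qpOdd_mul_qpEven_comm {a x : R} {k d : ℕ}
    (hx : x ^ (2 * (k + d) + 1) = 1) :
    (-1) ^ k * (qpOdd a x d * qpEven a x k)
      = (-1) ^ d * x ^ ((k + d) ^ 2 + k) * (qpOdd a x k * qpEven a x d) := by
  have hdk := qpOdd_mul_qpEven (a := a) (t := d) (s := k) (by rwa [add_comm d k])
  have hkd := qpOdd_mul_qpEven (a := a) (t := k) (s := d) hx
  have hpow : x ^ (k ^ 2) * x ^ ((k + d) ^ 2 + k) = x ^ (d ^ 2) := by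
    rw [← pow_add, show k ^ 2 + ((k + d) ^ 2 + k) = d ^ 2 + (2 * (k + d) + 1) * k by ring,
      pow_add, pow_mul, hx, one_pow, mul_one]
  rw [hdk, hkd, add_comm d k]
  linear_combination -(-1) ^ k * (-1) ^ d * qpEven a x (k + d) * hpow

end Products

open AdjoinRoot in
theorem X_pow_sub_one_dvd_qpOdd_mul_qpEven_sub {R : Type*} [CommRing R] (c : R) (k d : ℕ) :
    (X ^ (2 * (k + d) + 1) - 1 : R[X]) ∣
      (-1) ^ k * (qpOdd (C c) X d * qpEven (C c) X k)
        - (-1) ^ d * X ^ ((k + d) ^ 2 + k) * (qpOdd (C c) X k * qpEven (C c) X d) := by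
  have hroot : root (X ^ (2 * (k + d) + 1) - 1 : R[X]) ^ (2 * (k + d) + 1) = 1 := by
    have h := mk_self (f := (X ^ (2 * (k + d) + 1) - 1 : R[X]))
    rwa [map_sub, map_pow, mk_X, map_one, sub_eq_zero] at h
  rw [← mk_eq_mk]
  simp only [map_mul, map_pow, map_neg, map_one, map_qpOdd, map_qpEven, mk_X]
  exact neg_one_pow_mul_qpOdd_mul_qpEven_comm hroot

theorem isCoprime_X_pow_sub_one_C_sub_X_pow {K : Type*} [Field K] {c : K} {n : ℕ}
    (hc : c ^ n ≠ 1) (s : ℕ) : IsCoprime (X ^ n - 1 : K[X]) (C c - X ^ s) := by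
  obtain ⟨g, hg⟩ := sub_dvd_pow_sub_pow (C c) (X ^ s : K[X]) n
  obtain ⟨h, hh⟩ := dvd_pow_sub_one_of_dvd (r := (X : K[X])) (dvd_mul_left n s)
  have hbezout : h * (X ^ n - 1) + g * (C c - X ^ s) = C (c ^ n - 1) := by
    rw [mul_comm h, mul_comm g, ← hh, ← hg, map_sub, map_pow, map_one, ← pow_mul]
    ring
  refine ⟨C (c ^ n - 1)⁻¹ * h, C (c ^ n - 1)⁻¹ * g, ?_⟩
  rw [mul_assoc, mul_assoc, ← mul_add, hbezout, ← C_mul, inv_mul_cancel₀ (sub_ne_zero.mpr hc),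
    C_1]

theorem qpEven_C_X_ne_zero {R : Type*} [CommRing R] [IsDomain R] (c : R) (t : ℕ) :
    qpEven (C c) (X : R[X]) t ≠ 0 :=
  prod_ne_zero_iff.mpr fun j _ ↦ by
    rw [← neg_sub]
    exact neg_ne_zero.mpr (X_pow_sub_C_ne_zero (by omega) c)

theorem isCoprime_cyclotomic_qpEven {K : Type*} [Field K] {c : K} {n : ℕ} (hc : c ^ n ≠ 1)
    (t : ℕ) : IsCoprime (cyclotomic n K) (qpEven (C c) X t) :=
  IsCoprime.prod_right fun _ _ ↦ (isCoprime_X_pow_sub_one_C_sub_X_pow hc _).of_isCoprime_of_dvd_left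
    (cyclotomic.dvd_X_pow_sub_one n K)

theorem RatFunc.dvd_num_of_eq_div {K : Type*} [Field K] {x : RatFunc K} {f p q : K[X]}
    (hq : q ≠ 0) (hx : x = algebraMap K[X] (RatFunc K) p / algebraMap K[X] (RatFunc K) q)
    (hp : f ∣ p) (hf : IsCoprime f q) : f ∣ x.num :=
  hf.dvd_of_dvd_mul_right <| by
    rw [(RatFunc.num_mul_eq_mul_denom_iff hq).mpr hx]
    exact hp.mul_right _

section QPochhammer

variable {F : Type*} [Field F]

theorem qp_mul_sq (a x : F) (t : ℕ) : qp (a * x) (x ^ 2) t = qpOdd a x t :=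
  prod_congr rfl fun j _ ↦ by ring

theorem qp_sq_div (x : F) {a : F} (ha : a ≠ 0) (t : ℕ) :
    qp (x ^ 2 / a) (x ^ 2) t = qpEven a x t / a ^ t := by
  rw [qp, qpEven, pow_eq_prod_const a t, ← prod_div_distrib]
  refine prod_congr rfl fun j _ ↦ ?_
  field_simp
  ring

theorem qp_ratio_sub_eq_div {a x : F} (ha : a ≠ 0) {k d M : ℕ} (hd : qpEven a x d ≠ 0)
    (hk : qpEven a x k ≠ 0) :
    qp (a * x) (x ^ 2) d / qp (x ^ 2 / a) (x ^ 2) d -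
        (-a) ^ ((d : ℤ) - k) * (qp (a * x) (x ^ 2) k / qp (x ^ 2 / a) (x ^ 2) k) * x ^ M
      = (-1) ^ k * a ^ d * ((-1) ^ k * (qpOdd a x d * qpEven a x k)
          - (-1) ^ d * x ^ M * (qpOdd a x k * qpEven a x d)) / (qpEven a x d * qpEven a x k) := by
  rw [qp_mul_sq, qp_mul_sq, qp_sq_div x ha, qp_sq_div x ha,
    zpow_sub₀ (neg_ne_zero.mpr ha), zpow_natCast, zpow_natCast, neg_pow a d, neg_pow a k]
  have hsq : ((-1 : F) ^ k) ^ 2 = 1 := by rw [← pow_mul, pow_mul', neg_one_sq, one_pow]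
  field_simp
  linear_combination ((-1) ^ d * x ^ M * qpOdd a x k * qpEven a x d
    - (-1) ^ k * qpOdd a x d * qpEven a x k) * hsq

end QPochhammer

theorem RatFunc.X_pow_ne_one {K : Type*} [Field K] {n : ℕ} (hn : n ≠ 0) :
    (RatFunc.X : RatFunc K) ^ n ≠ 1 := by
  rw [← RatFunc.algebraMap_X, ← map_pow, ← map_one (algebraMap K[X] _),
    (RatFunc.algebraMap_injective K).ne_iff]
  exact fun h ↦ by simpa [hn] using congrArg natDegree h

theorem cyclotomic_dvd_num_qp_ratio_sub {K : Type*} [Field K] {c : K} (hc : c ≠ 0) {k d : ℕ}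
    (hcn : c ^ (2 * (k + d) + 1) ≠ 1) :
    cyclotomic (2 * (k + d) + 1) K ∣
      (qp (RatFunc.C c * RatFunc.X) (RatFunc.X ^ 2) d
            / qp (RatFunc.X ^ 2 / RatFunc.C c) (RatFunc.X ^ 2) d
        - (-RatFunc.C c) ^ ((d : ℤ) - k) * (qp (RatFunc.C c * RatFunc.X) (RatFunc.X ^ 2) k
            / qp (RatFunc.X ^ 2 / RatFunc.C c) (RatFunc.X ^ 2) k)
          * RatFunc.X ^ ((k + d) ^ 2 + k)).num := by
  have hEven (t : ℕ) : algebraMap K[X] (RatFunc K) (qpEven (C c) X t)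
      = qpEven (RatFunc.C c) RatFunc.X t := by
    rw [map_qpEven, RatFunc.algebraMap_C, RatFunc.algebraMap_X]
  have hEven_ne (t : ℕ) : qpEven (RatFunc.C c) (RatFunc.X : RatFunc K) t ≠ 0 :=
    hEven t ▸ RatFunc.algebraMap_ne_zero (qpEven_C_X_ne_zero c t)
  have hC : (RatFunc.C c : RatFunc K) ≠ 0 := by
    rw [← RatFunc.algebraMap_C]
    exact RatFunc.algebraMap_ne_zero (C_ne_zero.mpr hc)
  refine RatFunc.dvd_num_of_eq_div (mul_ne_zero (qpEven_C_X_ne_zero c d) (qpEven_C_X_ne_zero c k))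
    ?_ ((dvd_trans (cyclotomic.dvd_X_pow_sub_one _ _) (X_pow_sub_one_dvd_qpOdd_mul_qpEven_sub c k d)).mul_left
      ((-1) ^ k * C (c ^ d)))
    ((isCoprime_cyclotomic_qpEven hcn d).mul_right (isCoprime_cyclotomic_qpEven hcn k))
  rw [qp_ratio_sub_eq_div hC (hEven_ne d) (hEven_ne k)]
  simp only [map_mul, map_sub, map_pow, map_neg, map_one, hEven, map_qpOdd, RatFunc.algebraMap_C,
    RatFunc.algebraMap_X]

theorem stmt2_general (n : ℕ) (hodd : Odd n) (k : ℕ) (hk : k ≤ (n - 1) / 2) :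
    letI a : RatFunc (RatFunc ℚ) := RatFunc.C RatFunc.X
    letI q : RatFunc (RatFunc ℚ) := RatFunc.X
    Polynomial.cyclotomic n (RatFunc ℚ) ∣
      (qp (a * q) (q ^ 2) ((n - 1) / 2 - k) / qp (q ^ 2 / a) (q ^ 2) ((n - 1) / 2 - k) -
        (-a) ^ (((n : ℤ) - 1) / 2 - 2 * (k : ℤ)) *
          (qp (a * q) (q ^ 2) k / qp (q ^ 2 / a) (q ^ 2) k) *
          q ^ ((n - 1) ^ 2 / 4 + k)).num := by
  obtain ⟨m, rfl⟩ := hodd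
  obtain ⟨d, rfl⟩ : ∃ d, m = k + d := ⟨m - k, by omega⟩
  rw [show (2 * (k + d) + 1 - 1) / 2 - k = d by omega,
    show (((2 * (k + d) + 1 : ℕ) : ℤ) - 1) / 2 - 2 * (k : ℤ) = d - k by push_cast; omega,
    show (2 * (k + d) + 1 - 1) ^ 2 / 4 + k = (k + d) ^ 2 + k by
      rw [Nat.add_sub_cancel, mul_pow]; omega]
  exact cyclotomic_dvd_num_qp_ratio_sub RatFunc.X_ne_zero (RatFunc.X_pow_ne_one (by omega))

/-- Lemma 2.1 of the paper, a congruence mod `Φ_n(q)` for rational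
functions in the extra parameter `a` (the inner indeterminate) and `q`. -/
theorem stmt2 (n : ℕ) (hn : 0 < n) (hodd : Odd n) (k : ℕ) (hk : k ≤ (n - 1) / 2) :
    letI a : RatFunc (RatFunc ℚ) := RatFunc.C RatFunc.X
    letI q : RatFunc (RatFunc ℚ) := RatFunc.X
    Polynomial.cyclotomic n (RatFunc ℚ) ∣
      (qp (a * q) (q ^ 2) ((n - 1) / 2 - k) / qp (q ^ 2 / a) (q ^ 2) ((n - 1) / 2 - k) -
        (-a) ^ (((n : ℤ) - 1) / 2 - 2 * (k : ℤ)) *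
          (qp (a * q) (q ^ 2) k / qp (q ^ 2 / a) (q ^ 2) k) *
          q ^ ((n - 1) ^ 2 / 4 + k)).num :=
  stmt2_general n hodd k hk
end

section
/- For any odd prime p, sum_{k=0}^{(p-1)/2} (4k+1) * (-1/2)_k (1/2)_k^3 / ((k+1)! * k!^3) ≡ 2 p^3 (mod p^4), where (a)_k = a(a+1)...(a+k-1) is the Pochhammer symbol. -/
/-!
The sum telescopes: its partial sums are `8 (1/2)_N (1/2)_{N+1}^3 / ((N+1)! N!^3)`. Since
`(1/2)_N / N! = u := C(2N, N) / 4^N` and `(1/2)_{N+1} = (N + 1/2) (1/2)_N`, at `N = (p-1)/2` the sum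
equals `2 p^3 u^4 / (p + 1)`. Modulo `p`, `C(p-1, k) ≡ (-1)^k` and Fermat give `u^2 ≡ 1`, so
`u^4 / (p + 1) ≡ 1` and the sum is `2 p^3` modulo `p^4`.
-/

open Finset

/-- The rising factorial (Pochhammer symbol) of a rational number. -/
noncomputable def poch (a : ℚ) (k : ℕ) : ℚ :=
  ∏ j ∈ Finset.range k, (a + j)

open Nat

theorem poch_succ (a : ℚ) (k : ℕ) : poch a (k + 1) = poch a k * (a + k) :=
  prod_range_succ _ _

theorem poch_succ_left (a : ℚ) (k : ℕ) : poch a (k + 1) = a * poch (a + 1) k := by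
  simp only [poch, prod_range_succ', cast_zero, add_zero, cast_succ, add_assoc, add_comm (1 : ℚ)]
  ring

theorem poch_half_eq_centralBinom (k : ℕ) : poch (1 / 2) k = centralBinom k * k ! / 4 ^ k := by
  induction k with
  | zero => simp [poch]
  | succ k ih =>
    have h : (k + 1 : ℚ) * centralBinom (k + 1) = 2 * (2 * k + 1) * centralBinom k := by
      exact_mod_cast succ_mul_centralBinom_succ k
    rw [poch_succ, ih, factorial_succ]
    push_cast
    field_simp
    linear_combination (-2 * 4 ^ k : ℚ) * h

theorem sum_eq_poch (N : ℕ) :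
    ∑ k ∈ range (N + 1),
        (4 * (k : ℚ) + 1) * poch (-1/2) k * (poch (1/2) k) ^ 3 / ((k + 1)! * (k ! : ℚ) ^ 3)
      = 8 * poch (1/2) N * poch (1/2) (N + 1) ^ 3 / ((N + 1)! * (N ! : ℚ) ^ 3) := by
  induction N with
  | zero => norm_num [poch]
  | succ N ih =>
    rw [sum_range_succ, ih, poch_succ_left (-1/2), poch_succ (1/2) (N + 1), poch_succ (1/2) N,
      factorial_succ (N + 1), factorial_succ N]
    norm_num
    field_simp
    ring

theorem sum_eq_centralBinom (N : ℕ) :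
    ∑ k ∈ range (N + 1),
        (4 * (k : ℚ) + 1) * poch (-1/2) k * (poch (1/2) k) ^ 3 / ((k + 1)! * (k ! : ℚ) ^ 3)
      = (2 * N + 1) ^ 3 * (centralBinom N / 4 ^ N : ℚ) ^ 4 / (N + 1) := by
  rw [sum_eq_poch, poch_succ, poch_half_eq_centralBinom, factorial_succ]
  push_cast
  field_simp
  ring

theorem cast_choose_pred_eq_neg_one_pow {p : ℕ} (hp : p.Prime) {k : ℕ} (hk : k < p) :
    ((p - 1).choose k : ZMod p) = (-1) ^ k := by
  induction k with
  | zero => simp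
  | succ k ih =>
    have hpascal : (p - 1).choose k + (p - 1).choose (k + 1) = p.choose (k + 1) := by
      rw [← choose_succ_succ, succ_eq_add_one, Nat.sub_add_cancel hp.one_le]
    have hdvd : ((p.choose (k + 1) : ℕ) : ZMod p) = 0 :=
      (ZMod.natCast_eq_zero_iff _ _).2 (hp.dvd_choose_self k.succ_ne_zero hk)
    rw [← hpascal, cast_add, ih (by omega)] at hdvd
    linear_combination hdvd

theorem cast_centralBinom_sq_eq_one {N : ℕ} (hp : (2 * N + 1).Prime) :
    (centralBinom N : ZMod (2 * N + 1)) ^ 2 = 1 := by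
  rw [centralBinom_eq_two_mul_choose, ← Nat.add_sub_cancel (2 * N) 1,
    cast_choose_pred_eq_neg_one_pow hp (by omega), ← pow_mul]
  exact Even.neg_one_pow ⟨N, by ring⟩

theorem four_pow_sq_eq_one {N : ℕ} (hp : (2 * N + 1).Prime) :
    ((4 : ZMod (2 * N + 1)) ^ N) ^ 2 = 1 := by
  have : Fact (2 * N + 1).Prime := ⟨hp⟩
  have h2 : (2 : ZMod (2 * N + 1)) ≠ 0 := fun h => by
    have := Nat.le_of_dvd two_pos ((ZMod.natCast_eq_zero_iff 2 _).1 (mod_cast h))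
    have := hp.two_le
    omega
  have hfermat := ZMod.pow_card_sub_one_eq_one h2
  rw [Nat.add_sub_cancel] at hfermat
  rw [← pow_mul, show (4 : ZMod (2 * N + 1)) = 2 ^ 2 by norm_num, ← pow_mul,
    show 2 * (N * 2) = 2 * N * 2 by ring, pow_mul, hfermat, one_pow]

/-- for any odd prime `p`,
`∑_{k=0}^{(p-1)/2} (4k+1) (-1/2)_k (1/2)_k^3 / ((k+1)! k!^3) ≡ 2p^3 (mod p^4)`. -/
theorem stmt8 (p : ℕ) (hp : p.Prime) (hodd : p ≠ 2) :
    ∃ a b : ℤ, ¬ (p : ℤ) ∣ b ∧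
      (∑ k ∈ Finset.range ((p - 1) / 2 + 1),
          (4 * (k : ℚ) + 1) * poch (-1/2) k * (poch (1/2) k) ^ 3 /
            ((Nat.factorial (k + 1) : ℚ) * (Nat.factorial k : ℚ) ^ 3))
        - 2 * (p : ℚ) ^ 3 = (p : ℚ) ^ 4 * (a : ℚ) / (b : ℚ) := by
  obtain ⟨N, rfl⟩ := hp.odd_of_ne_two hodd
  have : Fact (2 * N + 1).Prime := ⟨hp⟩
  have hb : (((4 ^ N) ^ 4 * (2 * N + 2) : ℤ) : ZMod (2 * N + 1)) = 1 := by
    have hp0 : ((2 * N + 1 : ℕ) : ZMod (2 * N + 1)) = 0 := ZMod.natCast_self _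
    push_cast at hp0 ⊢
    rw [show ((4 : ZMod (2 * N + 1)) ^ N) ^ 4 = (((4 : ZMod (2 * N + 1)) ^ N) ^ 2) ^ 2 by ring,
      four_pow_sq_eq_one hp]
    linear_combination hp0
  obtain ⟨e, he⟩ :
      ((2 * N + 1 : ℕ) : ℤ) ∣ centralBinom N ^ 4 - (4 ^ N) ^ 4 * (2 * N + 2) := by
    rw [← ZMod.intCast_zmod_eq_zero_iff_dvd, Int.cast_sub, hb]
    push_cast
    rw [show (centralBinom N : ZMod (2 * N + 1)) ^ 4 = ((centralBinom N : ZMod (2 * N + 1)) ^ 2) ^ 2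
      by ring, cast_centralBinom_sq_eq_one hp]
    ring
  refine ⟨2 * e, (4 ^ N) ^ 4 * (2 * N + 2), fun h => ?_, ?_⟩
  · rw [← ZMod.intCast_zmod_eq_zero_iff_dvd, hb] at h
    exact one_ne_zero h
  · have he' : (centralBinom N ^ 4 - (4 ^ N) ^ 4 * (2 * N + 2) : ℚ) = (2 * N + 1) * e := by
      exact_mod_cast he
    rw [Nat.add_sub_cancel, Nat.mul_div_cancel_left N two_pos, sum_eq_centralBinom]
    push_cast
    field_simp
    linear_combination he'
end

section
/- For every positive integer N with gcd(N+1, 6) = 1, the q-binomial coefficient [4N choose 2N]_q is divisible by [N+1]_q in Z[q]. -/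
open Finset Polynomial

/-! Over `ℚ`, `[N+1]` is the product of the pairwise coprime irreducible cyclotomic polynomials
`Φ_d` with `1 < d ∣ N+1`. From `[a+b]! = [a+b, a] [a]! [b]!` and the fact that `Φ_d` occurs in
`[n]!` exactly `⌊n/d⌋` times, `Φ_d` occurs in `[4N, 2N]` exactly `⌊4N/d⌋ - 2⌊2N/d⌋` times, and this
is `1` when `d ∣ N+1` and `d ≥ 5`; coprimality with `6` rules out `d = 2, 3, 4`. As `[N+1]` is
monic, divisibility over `ℚ` descends to `ℤ`. -/

section QAnalogues

variable (R : Type*) [CommSemiring R]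

noncomputable def qNat (m : ℕ) : R[X] := ∑ i ∈ range m, X ^ i

noncomputable def qFact (n : ℕ) : R[X] := ∏ i ∈ range n, qNat R (i + 1)

noncomputable def gaussBinom : ℕ → ℕ → R[X]
  | _, 0 => 1
  | 0, _ + 1 => 0
  | n + 1, k + 1 => gaussBinom n k + X ^ (k + 1) * gaussBinom n (k + 1)

variable {R}

theorem qNat_add (a b : ℕ) : qNat R (a + b) = qNat R a + X ^ a * qNat R b := by
  simp only [qNat, sum_range_add, mul_sum, pow_add]

theorem qFact_succ (n : ℕ) : qFact R (n + 1) = qFact R n * qNat R (n + 1) :=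
  prod_range_succ _ _

theorem gaussBinom_zero_right (n : ℕ) : gaussBinom R n 0 = 1 := by
  cases n <;> rfl

theorem gaussBinom_succ_succ (n k : ℕ) :
    gaussBinom R (n + 1) (k + 1) = gaussBinom R n k + X ^ (k + 1) * gaussBinom R n (k + 1) :=
  rfl

theorem gaussBinom_eq_zero_of_lt : ∀ {n k : ℕ}, n < k → gaussBinom R n k = 0
  | 0, _ + 1, _ => rfl
  | n + 1, k + 1, h => by
    rw [gaussBinom_succ_succ, gaussBinom_eq_zero_of_lt (by omega : n < k),
      gaussBinom_eq_zero_of_lt (by omega : n < k + 1), mul_zero, add_zero]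

theorem gaussBinom_self : ∀ n : ℕ, gaussBinom R n n = 1
  | 0 => rfl
  | n + 1 => by
    rw [gaussBinom_succ_succ, gaussBinom_self n, gaussBinom_eq_zero_of_lt n.lt_succ_self,
      mul_zero, add_zero]

theorem gaussBinom_mul_qFact_mul_qFact (a b : ℕ) :
    gaussBinom R (a + b) a * qFact R a * qFact R b = qFact R (a + b) := by
  induction a generalizing b with
  | zero => simp [gaussBinom_zero_right, qFact]
  | succ a iha =>
    induction b with
    | zero => simp [gaussBinom_self, qFact]
    | succ b ihb =>
      have h₁ := iha (b + 1)
      rw [← add_assoc] at h₁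
      rw [Nat.add_right_comm] at ihb
      calc gaussBinom R (a + 1 + (b + 1)) (a + 1) * qFact R (a + 1) * qFact R (b + 1)
          = gaussBinom R (a + b + 1) a * qFact R a * qFact R (b + 1) * qNat R (a + 1) +
              X ^ (a + 1) * qNat R (b + 1) *
                (gaussBinom R (a + b + 1) (a + 1) * qFact R (a + 1) * qFact R b) := by
            rw [show a + 1 + (b + 1) = a + b + 1 + 1 by ring, gaussBinom_succ_succ,
              qFact_succ a, qFact_succ b]
            ring
        _ = qFact R (a + b + 1) * (qNat R (a + 1) + X ^ (a + 1) * qNat R (b + 1)) := by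
            rw [h₁, ihb]; ring
        _ = qFact R (a + 1 + (b + 1)) := by
            rw [← qNat_add, show a + 1 + (b + 1) = a + b + 1 + 1 by ring, qFact_succ (a + b + 1)]

theorem qNat_map {S : Type*} [CommSemiring S] (f : R →+* S) (m : ℕ) :
    (qNat R m).map f = qNat S m := by
  simp [qNat, Polynomial.map_sum]

theorem gaussBinom_map {S : Type*} [CommSemiring S] (f : R →+* S) :
    ∀ n k : ℕ, (gaussBinom R n k).map f = gaussBinom S n k
  | _, 0 => by simp [gaussBinom_zero_right]
  | 0, _ + 1 => by simp [gaussBinom]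
  | n + 1, k + 1 => by
    simp [gaussBinom_succ_succ, gaussBinom_map f n k, gaussBinom_map f n (k + 1)]

end QAnalogues

theorem qNat_monic {R : Type*} [CommSemiring R] {m : ℕ} (hm : m ≠ 0) : (qNat R m).Monic :=
  monic_geom_sum_X hm

theorem qFact_monic {R : Type*} [CommSemiring R] (n : ℕ) : (qFact R n).Monic :=
  monic_prod_of_monic _ _ fun i _ => qNat_monic i.succ_ne_zero

theorem qp_X_X (n : ℕ) :
    qp (RatFunc.X : RatFunc ℚ) RatFunc.X n =
      algebraMap ℚ[X] (RatFunc ℚ) ((1 - X) ^ n * qFact ℚ n) := by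
  have hfactor : ∀ j ∈ range n, (1 - RatFunc.X * RatFunc.X ^ j : RatFunc ℚ) =
      algebraMap ℚ[X] (RatFunc ℚ) ((1 - X) * qNat ℚ (j + 1)) := by
    intro j _
    rw [qNat, mul_neg_geom_sum, map_sub, map_one, map_pow, RatFunc.algebraMap_X, pow_succ']
  rw [qp, prod_congr rfl hfactor, ← map_prod, prod_mul_distrib, prod_const, card_range, qFact]

theorem qbin_add (a b : ℕ) :
    qbin (a + b) a = algebraMap ℚ[X] (RatFunc ℚ) (gaussBinom ℚ (a + b) a) := by
  have hX : (1 - X : ℚ[X]) ≠ 0 := fun h => by simpa using congrArg (eval 0) h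
  have hden : ∀ n, algebraMap ℚ[X] (RatFunc ℚ) ((1 - X) ^ n * qFact ℚ n) ≠ 0 := fun n =>
    RatFunc.algebraMap_ne_zero (mul_ne_zero (pow_ne_zero n hX) (qFact_monic n).ne_zero)
  rw [qbin, Nat.add_sub_cancel_left, qp_X_X, qp_X_X, qp_X_X,
    div_eq_iff (mul_ne_zero (hden a) (hden b)), ← map_mul, ← map_mul,
    ← gaussBinom_mul_qFact_mul_qFact, pow_add]
  ring_nf

theorem qNat_eq_prod_cyclotomic {R : Type*} [CommRing R] [IsDomain R] {m : ℕ} (hm : 0 < m) :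
    qNat R m = ∏ d ∈ m.divisors.erase 1, cyclotomic d R := by
  have hX : (X - 1 : R[X]) ≠ 0 := by simpa using X_sub_C_ne_zero (1 : R)
  refine mul_right_cancel₀ hX ?_
  rw [qNat, geom_sum_mul, ← prod_cyclotomic_eq_X_pow_sub_one hm,
    ← mul_prod_erase _ _ (Nat.one_mem_divisors.mpr hm.ne'), cyclotomic_one, mul_comm]

theorem cyclotomic_rat_prime {d : ℕ} (hd : 0 < d) : Prime (cyclotomic d ℚ) :=
  (cyclotomic.irreducible_rat hd).prime

theorem emultiplicity_cyclotomic_cyclotomic {d e : ℕ} (hd : 0 < d) :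
    emultiplicity (cyclotomic d ℚ) (cyclotomic e ℚ) = if d = e then 1 else 0 := by
  split_ifs with hde
  · subst hde
    simpa using emultiplicity_pow_self (cyclotomic_rat_prime hd).ne_zero
      (cyclotomic_rat_prime hd).not_isUnit 1
  · exact emultiplicity_eq_zero.mpr fun h =>
      (cyclotomic_rat_prime hd).not_isUnit ((cyclotomic.isCoprime_rat hde).isUnit_of_dvd' dvd_rfl h)

theorem emultiplicity_cyclotomic_qNat {d m : ℕ} (hd : 2 ≤ d) (hm : 0 < m) :
    emultiplicity (cyclotomic d ℚ) (qNat ℚ m) = if d ∣ m then 1 else 0 := by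
  rw [qNat_eq_prod_cyclotomic hm, Finset.emultiplicity_prod (cyclotomic_rat_prime (by omega)),
    sum_congr rfl fun e _ => emultiplicity_cyclotomic_cyclotomic (by omega), sum_ite_eq]
  simp [hm.ne', show d ≠ 1 by omega]

theorem emultiplicity_cyclotomic_qFact {d : ℕ} (hd : 2 ≤ d) (n : ℕ) :
    emultiplicity (cyclotomic d ℚ) (qFact ℚ n) = (n / d : ℕ) := by
  rw [qFact, Finset.emultiplicity_prod (cyclotomic_rat_prime (by omega)),
    sum_congr rfl fun i _ => emultiplicity_cyclotomic_qNat hd i.succ_pos, sum_boole,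
    Nat.card_multiples]

theorem cyclotomic_dvd_gaussBinom {d a b : ℕ} (hd : 2 ≤ d) (h : a / d + b / d < (a + b) / d) :
    cyclotomic d ℚ ∣ gaussBinom ℚ (a + b) a := by
  have hp := cyclotomic_rat_prime (show 0 < d by omega)
  have hmult := congrArg (emultiplicity (cyclotomic d ℚ)) (gaussBinom_mul_qFact_mul_qFact a b)
  rw [emultiplicity_mul hp, emultiplicity_mul hp, emultiplicity_cyclotomic_qFact hd,
    emultiplicity_cyclotomic_qFact hd, emultiplicity_cyclotomic_qFact hd] at hmult
  by_contra hndvd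
  rw [emultiplicity_eq_zero.mpr hndvd, zero_add] at hmult
  norm_cast at hmult
  omega

theorem div_add_div_lt_of_dvd_succ {N d : ℕ} (hd : 5 ≤ d) (hdvd : d ∣ N + 1) :
    2 * N / d + 2 * N / d < (2 * N + 2 * N) / d := by
  obtain ⟨k, hk⟩ := hdvd
  obtain ⟨m, rfl⟩ : ∃ m, k = m + 1 := ⟨k - 1, by cases k <;> simp_all⟩
  have h₂ : 2 * N / d = 2 * m + 1 := Nat.div_eq_of_lt_le (by nlinarith) (by nlinarith)
  have h₄ : (2 * N + 2 * N) / d = 4 * m + 3 := Nat.div_eq_of_lt_le (by nlinarith) (by nlinarith)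
  omega

theorem five_le_of_coprime_six {d : ℕ} (hd : d ≠ 1) (h : Nat.Coprime d 6) : 5 ≤ d := by
  by_contra! hlt
  interval_cases d <;> simp_all [Nat.coprime_iff_gcd_eq_one]

theorem qNat_dvd_gaussBinom {N : ℕ} (hcop : Nat.Coprime (N + 1) 6) :
    qNat ℤ (N + 1) ∣ gaussBinom ℤ (2 * N + 2 * N) (2 * N) := by
  rw [← map_dvd_map (Int.castRingHom ℚ) Int.cast_injective (qNat_monic N.succ_ne_zero),
    qNat_map, gaussBinom_map, qNat_eq_prod_cyclotomic N.succ_pos]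
  refine prod_dvd_of_coprime (fun d _ e _ hde => cyclotomic.isCoprime_rat hde) fun d hd => ?_
  obtain ⟨hd1, hdvd, -⟩ : d ≠ 1 ∧ d ∣ N + 1 ∧ N + 1 ≠ 0 := by simpa using hd
  have hd5 := five_le_of_coprime_six hd1 (Nat.Coprime.coprime_dvd_left hdvd hcop)
  exact cyclotomic_dvd_gaussBinom (by omega) (div_add_div_lt_of_dvd_succ hd5 hdvd)

theorem stmt14_general (N : ℕ) (hcop : Nat.Coprime (N + 1) 6) :
    ∃ P : Polynomial ℤ,
      qbin (4 * N) (2 * N) =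
        algebraMap (Polynomial ℚ) (RatFunc ℚ)
          (qnat (N + 1) * P.map (Int.castRingHom ℚ)) := by
  obtain ⟨P, hP⟩ := qNat_dvd_gaussBinom hcop
  refine ⟨P, ?_⟩
  rw [show 4 * N = 2 * N + 2 * N by ring, qbin_add, ← gaussBinom_map (Int.castRingHom ℚ), hP,
    Polynomial.map_mul, qNat_map]
  rfl

/-- `[N+1]_q` divides `[4N,2N]_q` in `ℤ[q]` when `gcd(N+1,6)=1`. -/
theorem stmt14 (N : ℕ) (hN : 0 < N) (hcop : Nat.Coprime (N + 1) 6) :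
    ∃ P : Polynomial ℤ,
      qbin (4 * N) (2 * N) =
        algebraMap (Polynomial ℚ) (RatFunc ℚ)
          (qnat (N + 1) * P.map (Int.castRingHom ℚ)) :=
  stmt14_general N hcop
end

section
/- Let n be a positive odd integer, r a positive integer, and M = n-1 or (n-1)/2. Then sum_{k=0}^{M} (-1)^k q^{k^2+(r-2)k} [4k+1] * (q;q^2)_k^{2r-1}/(q^2;q^2)_k^{2r-1} ≡ 0 (mod Phi_n(q)) for n > 1; the key step is that for 0 <= k <= (n-1)/2 the k-th and ((n-1)/2 - k)-th summands sum to 0 modulo Phi_n(q). -/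
/-!
Let `ζ` be a primitive `n`-th root of unity, `n = 2m + 1`. The denominators `(ζ²;ζ²)_j`,
`j < n`, do not vanish, so `Φ_n`, the minimal polynomial of `ζ` over `ℚ`, divides the numerator
of a sum of summands as soon as that sum vanishes at `q = ζ`.

For `k + l = m`, reflecting through `ζⁿ = 1` gives
`(ζ;ζ²)_k (ζ²;ζ²)_l = (-1)^k ζ^(k²) (ζ²;ζ²)_m`. Applied to `(k, l)` and to `(l, k)`, it
turns the sum of the `k`-th and `l`-th summands into `(ζ²;ζ²)_m^(2r-1)` times
`ζ^a [4k+1] + ζ^b [4l+1]`, where `a ≡ b + 4l + 1 (mod n)`; this vanishes since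
`(4k+1) + (4l+1) = 2n`. Pairing `j` with `m - j` kills the sum up to `m`, and the summands
with `m < j < n` vanish because `(ζ;ζ²)_j` contains the factor `1 - ζⁿ`.
-/

open Finset Polynomial

section Summand

variable {F : Type*} [Field F]

noncomputable def summand (r : ℕ) (q : F) (j : ℕ) : F :=
  (-1) ^ j * q ^ ((j : ℤ) ^ 2 + ((r : ℤ) - 2) * j) * (∑ i ∈ range (4 * j + 1), q ^ i) *
    qp q (q ^ 2) j ^ (2 * r - 1) / qp (q ^ 2) (q ^ 2) j ^ (2 * r - 1)

lemma sum_range_two_mul_add_one (k : ℕ) : ∑ i ∈ range k, (2 * i + 1) = k ^ 2 := by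
  induction k with
  | zero => simp
  | succ k ih => rw [sum_range_succ, ih]; ring

/-- The top `k` factors `1 - q^(2(l+i)+2)` of `(q²;q²)_{k+l}` are, up to `-q^(2(k-1-i)+1)`,
the factors of `(q;q²)_k` read backwards, because the two exponents add up to `2(k+l)+1`. -/
lemma qp_mul_qp_eq_of_pow_eq_one {q : F} {k l : ℕ} (hq : q ^ (2 * (k + l) + 1) = 1) :
    qp q (q ^ 2) k * qp (q ^ 2) (q ^ 2) l =
      (-1) ^ k * q ^ (k ^ 2) * qp (q ^ 2) (q ^ 2) (k + l) := by
  have htail : q ^ (k ^ 2) * ∏ i ∈ range k, (1 - q ^ 2 * (q ^ 2) ^ (l + i)) =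
      (-1) ^ k * qp q (q ^ 2) k := by
    rw [← sum_range_two_mul_add_one, ← prod_pow_eq_pow_sum,
      ← prod_range_reflect (fun i => 1 - q ^ 2 * (q ^ 2) ^ (l + i)), ← prod_mul_distrib, qp,
      ← card_range k, ← prod_const, card_range, ← prod_mul_distrib]
    refine prod_congr rfl fun i hi => ?_
    obtain ⟨j, rfl⟩ := Nat.exists_eq_add_of_lt (mem_range.mp hi)
    have hn : q ^ (2 * i + 1) * (q ^ 2 * (q ^ 2) ^ (l + (i + j + 1 - 1 - i))) = 1 := by
      rw [← hq, show i + j + 1 - 1 - i = j by omega]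
      ring
    linear_combination -hn
  have hsplit : qp (q ^ 2) (q ^ 2) (k + l) =
      qp (q ^ 2) (q ^ 2) l * ∏ i ∈ range k, (1 - q ^ 2 * (q ^ 2) ^ (l + i)) := by
    rw [add_comm, qp, qp, prod_range_add]
  have hsign : (-1 : F) ^ (k + k) = 1 := Even.neg_one_pow ⟨k, rfl⟩
  rw [hsplit]
  linear_combination -(-1) ^ k * qp (q ^ 2) (q ^ 2) l * htail -
    qp q (q ^ 2) k * qp (q ^ 2) (q ^ 2) l * hsign

lemma zpow_mul_geom_sum_add_zpow_mul_geom_sum_eq_zero {q : F} {k l : ℕ}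
    (hq : q ^ (2 * (k + l) + 1) = 1) (hq1 : q ≠ 1) {a b c : ℤ}
    (hab : a = b + (4 * l + 1) + (2 * (k + l) + 1) * c) :
    q ^ a * ∑ i ∈ range (4 * k + 1), q ^ i +
      q ^ b * ∑ i ∈ range (4 * l + 1), q ^ i = 0 := by
  have hq0 : q ≠ 0 := by rintro rfl; simp at hq
  have ha : q ^ a = q ^ b * q ^ (4 * l + 1) := by
    have hn : q ^ ((2 * (k + l) + 1 : ℕ) : ℤ) = 1 := by rw [zpow_natCast, hq]
    rw [hab, zpow_add₀ hq0, zpow_add₀ hq0, zpow_mul, ← zpow_natCast q (4 * l + 1)]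
    push_cast at hn ⊢
    rw [hn, one_zpow, mul_one]
  have hb : q ^ a * q ^ (4 * k + 1) = q ^ b := by
    rw [ha, mul_assoc, ← pow_add, show 4 * l + 1 + (4 * k + 1) = (2 * (k + l) + 1) * 2 by ring,
      pow_mul, hq, one_pow, mul_one]
  refine mul_right_cancel₀ (sub_ne_zero.mpr hq1) ?_
  linear_combination q ^ a * geom_sum_mul q (4 * k + 1) + q ^ b * geom_sum_mul q (4 * l + 1) +
    hb - ha

lemma summand_add_summand_eq_zero {r : ℕ} (hr : 0 < r) {q : F} {k l : ℕ}
    (hq : q ^ (2 * (k + l) + 1) = 1) (hq1 : q ≠ 1) (hk : qp (q ^ 2) (q ^ 2) k ≠ 0)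
    (hl : qp (q ^ 2) (q ^ 2) l ≠ 0) :
    summand r q k + summand r q l = 0 := by
  obtain ⟨r, rfl⟩ : ∃ r', r = r' + 1 := ⟨r - 1, by omega⟩
  have hq0 : q ≠ 0 := by rintro rfl; simp at hq
  unfold summand
  rw [show 2 * (r + 1) - 1 = 2 * r + 1 by omega,
    div_add_div _ _ (pow_ne_zero _ hk) (pow_ne_zero _ hl), div_eq_zero_iff]
  left
  set e : ℕ → ℤ := fun j => (j : ℤ) ^ 2 + ((↑(r + 1) : ℤ) - 2) * j
  set G : ℕ → F := fun j => ∑ i ∈ range (4 * j + 1), q ^ i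
  set B := qp (q ^ 2) (q ^ 2) (k + l)
  have hkl := congrArg (· ^ (2 * r + 1)) (qp_mul_qp_eq_of_pow_eq_one hq)
  have hlk := congrArg (· ^ (2 * r + 1))
    (qp_mul_qp_eq_of_pow_eq_one (q := q) (k := l) (l := k) (by rwa [add_comm l k]))
  rw [add_comm l k] at hlk
  have hsign (j : ℕ) : (-1 : F) ^ j * ((-1) ^ j) ^ (2 * r + 1) = 1 := by
    rw [← pow_succ', ← pow_mul]
    exact Even.neg_one_pow ⟨j * (r + 1), by ring⟩
  have hzpow (j : ℕ) : q ^ (e j + ((j ^ 2 * (2 * r + 1) : ℕ) : ℤ)) =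
      q ^ e j * (q ^ (j ^ 2)) ^ (2 * r + 1) := by
    rw [zpow_add₀ hq0, zpow_natCast, pow_mul]
  have hG := zpow_mul_geom_sum_add_zpow_mul_geom_sum_eq_zero hq hq1
    (a := e k + ((k ^ 2 * (2 * r + 1) : ℕ) : ℤ))
    (b := e l + ((l ^ 2 * (2 * r + 1) : ℕ) : ℤ))
    (c := ((k : ℤ) - l) * (r + 1) - 1) (by simp only [e]; push_cast; ring)
  linear_combination (-1) ^ k * q ^ e k * G k * hkl + (-1) ^ l * q ^ e l * G l * hlk +
    B ^ (2 * r + 1) * q ^ e k * (q ^ k ^ 2) ^ (2 * r + 1) * G k * hsign k +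
    B ^ (2 * r + 1) * q ^ e l * (q ^ l ^ 2) ^ (2 * r + 1) * G l * hsign l -
    B ^ (2 * r + 1) * G k * hzpow k - B ^ (2 * r + 1) * G l * hzpow l + B ^ (2 * r + 1) * hG

lemma summand_eq_zero_of_lt {r m j : ℕ} (hr : 0 < r) {q : F} (hq : q ^ (2 * m + 1) = 1)
    (hj : m < j) : summand r q j = 0 := by
  have hqp : qp q (q ^ 2) j = 0 :=
    prod_eq_zero (mem_range.mpr hj) (by rw [← pow_mul, ← pow_succ', hq, sub_self])
  rw [summand, hqp, zero_pow (by omega), mul_zero, zero_div]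

lemma IsPrimitiveRoot.qp_sq_ne_zero {n j : ℕ} {ζ : F} (hζ : IsPrimitiveRoot ζ n) (hn : Odd n)
    (hj : j < n) : qp (ζ ^ 2) (ζ ^ 2) j ≠ 0 := by
  refine prod_ne_zero_iff.mpr fun i hi => sub_ne_zero.mpr fun h => ?_
  rw [← pow_succ', ← pow_mul, eq_comm, hζ.pow_eq_one_iff_dvd,
    show 2 * (i + 1) = (i + 1) * 2 by ring] at h
  have := Nat.le_of_dvd (by omega) (hn.coprime_two_right.dvd_of_dvd_mul_right h)
  have := mem_range.mp hi
  omega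

lemma IsPrimitiveRoot.summand_add_summand_eq_zero {r k l : ℕ} (hr : 0 < r) {ζ : F}
    (hζ : IsPrimitiveRoot ζ (2 * (k + l) + 1)) (hkl : 0 < k + l) :
    summand r ζ k + summand r ζ l = 0 :=
  _root_.summand_add_summand_eq_zero hr hζ.pow_eq_one (hζ.ne_one (by omega))
    (hζ.qp_sq_ne_zero (odd_two_mul_add_one _) (by omega))
    (hζ.qp_sq_ne_zero (odd_two_mul_add_one _) (by omega))

lemma IsPrimitiveRoot.sum_range_summand_eq_zero [CharZero F] {r m : ℕ} (hr : 0 < r) {ζ : F}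
    (hζ : IsPrimitiveRoot ζ (2 * m + 1)) (hm : 0 < m) :
    ∑ j ∈ range (m + 1), summand r ζ j = 0 := by
  have hpairs : ∑ j ∈ range (m + 1), (summand r ζ j + summand r ζ (m - j)) = 0 := by
    refine sum_eq_zero fun j hj => ?_
    have hjm : j + (m - j) = m := by have := mem_range.mp hj; omega
    exact IsPrimitiveRoot.summand_add_summand_eq_zero hr (by rwa [hjm]) (by omega)
  have hreflect :
      ∑ j ∈ range (m + 1), summand r ζ (m - j) = ∑ j ∈ range (m + 1), summand r ζ j := by
    simpa using sum_range_reflect (fun j => summand r ζ j) (m + 1)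
  rw [sum_add_distrib, hreflect, ← two_mul] at hpairs
  simpa using hpairs

lemma IsPrimitiveRoot.sum_range_two_mul_add_one_summand_eq_zero [CharZero F] {r m : ℕ}
    (hr : 0 < r) {ζ : F} (hζ : IsPrimitiveRoot ζ (2 * m + 1)) (hm : 0 < m) :
    ∑ j ∈ range (2 * m + 1), summand r ζ j = 0 := by
  rw [show 2 * m + 1 = m + 1 + m by ring, sum_range_add, hζ.sum_range_summand_eq_zero hr hm,
    zero_add]
  exact sum_eq_zero fun j _ => summand_eq_zero_of_lt hr hζ.pow_eq_one (by omega)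

end Summand

section SummandQuotient

variable {R S : Type*} [CommRing R] [CommRing S]

/-- Numerator and denominator of `summand r q j`; for `0 < r` the truncated exponent
`j ^ 2 + r * j - 2 * j` is the integer `j² + (r - 2) j` of `summand`. -/
def summandNum (r : ℕ) (q : R) (j : ℕ) : R :=
  (-1) ^ j * q ^ (j ^ 2 + r * j - 2 * j) * (∑ i ∈ range (4 * j + 1), q ^ i) *
    (∏ i ∈ range j, (1 - q * (q ^ 2) ^ i)) ^ (2 * r - 1)

def summandDen (r : ℕ) (q : R) (j : ℕ) : R :=
  (∏ i ∈ range j, (1 - q ^ 2 * (q ^ 2) ^ i)) ^ (2 * r - 1)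

lemma map_summandNum (φ : R →+* S) (r : ℕ) (q : R) (j : ℕ) :
    φ (summandNum r q j) = summandNum r (φ q) j := by
  simp [summandNum, map_prod]

lemma map_summandDen (φ : R →+* S) (r : ℕ) (q : R) (j : ℕ) :
    φ (summandDen r q j) = summandDen r (φ q) j := by
  simp [summandDen, map_prod]

lemma summand_eq_summandNum_div_summandDen {F : Type*} [Field F] {r : ℕ} (hr : 0 < r) (q : F)
    (j : ℕ) : summand r q j = summandNum r q j / summandDen r q j := by
  have hexp : (j : ℤ) ^ 2 + ((r : ℤ) - 2) * j = ((j ^ 2 + r * j - 2 * j : ℕ) : ℤ) := by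
    rcases Nat.eq_zero_or_pos j with rfl | hj
    · simp
    · rw [Nat.cast_sub (by nlinarith)]
      push_cast
      ring
  rw [summand, summandNum, summandDen, hexp, zpow_natCast]
  rfl

end SummandQuotient

universe u

namespace RatFunc

variable {K L : Type u} [Field K] [Field L] {f : K →+* L} {a : L}

lemma eval₂_denom_add_ne_zero {x y : RatFunc K} (hx : x.denom.eval₂ f a ≠ 0)
    (hy : y.denom.eval₂ f a ≠ 0) : (x + y).denom.eval₂ f a ≠ 0 := fun h =>
  mul_ne_zero hx hy <| by
    simpa only [eval₂_mul] using
      eval₂_eq_zero_of_dvd_of_eval₂_eq_zero f a (denom_add_dvd x y) h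

lemma eval₂_denom_sum_ne_zero {ι : Type*} {s : Finset ι} {x : ι → RatFunc K}
    (hx : ∀ i ∈ s, (x i).denom.eval₂ f a ≠ 0) :
    (∑ i ∈ s, x i).denom.eval₂ f a ≠ 0 := by
  classical
  induction s using Finset.induction_on with
  | empty => simp
  | insert i s hi ih =>
    rw [sum_insert hi]
    exact eval₂_denom_add_ne_zero (hx i (mem_insert_self i s))
      (ih fun j hj => hx j (mem_insert_of_mem hj))

lemma eval_sum {ι : Type*} {s : Finset ι} {x : ι → RatFunc K}
    (hx : ∀ i ∈ s, (x i).denom.eval₂ f a ≠ 0) :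
    eval f a (∑ i ∈ s, x i) = ∑ i ∈ s, eval f a (x i) := by
  classical
  induction s using Finset.induction_on with
  | empty => simp
  | insert i s hi ih =>
    have hs : ∀ j ∈ s, (x j).denom.eval₂ f a ≠ 0 := fun j hj => hx j (mem_insert_of_mem hj)
    rw [sum_insert hi, sum_insert hi, eval_add f a (hx i (mem_insert_self i s))
      (eval₂_denom_sum_ne_zero hs), ih hs]

lemma eval₂_denom_div_ne_zero {p q : K[X]} (hq : q.eval₂ f a ≠ 0) :
    (algebraMap K[X] (RatFunc K) p / algebraMap K[X] (RatFunc K) q).denom.eval₂ f a ≠ 0 :=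
  fun h => hq (eval₂_eq_zero_of_dvd_of_eval₂_eq_zero f a (denom_div_dvd p q) h)

lemma eval_div_algebraMap {p q : K[X]} (hq : q.eval₂ f a ≠ 0) :
    eval f a (algebraMap K[X] (RatFunc K) p / algebraMap K[X] (RatFunc K) q) =
      p.eval₂ f a / q.eval₂ f a := by
  have hq0 : algebraMap K[X] (RatFunc K) q ≠ 0 :=
    algebraMap_ne_zero fun h => hq (by simp [h])
  have hmul := eval_mul f a (eval₂_denom_div_ne_zero (p := p) hq)
    (y := algebraMap K[X] (RatFunc K) q) (by simp)
  rw [div_mul_cancel₀ _ hq0, eval_algebraMap, eval_algebraMap, Algebra.algebraMap_self,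
    RingHom.id_apply, RingHom.id_apply] at hmul
  rw [eq_div_iff hq, ← hmul]

lemma summand_X_eq {r : ℕ} (hr : 0 < r) (j : ℕ) :
    summand r (X : RatFunc K) j = algebraMap K[X] (RatFunc K) (summandNum r Polynomial.X j) /
      algebraMap K[X] (RatFunc K) (summandDen r Polynomial.X j) := by
  rw [summand_eq_summandNum_div_summandDen hr, map_summandNum, map_summandDen, algebraMap_X]

lemma eval₂_summandDen_X (r j : ℕ) :
    (summandDen r Polynomial.X j).eval₂ f a = qp (a ^ 2) (a ^ 2) j ^ (2 * r - 1) := by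
  rw [← coe_eval₂RingHom, map_summandDen, coe_eval₂RingHom, eval₂_X]
  rfl

lemma eval₂_denom_summand_X_ne_zero {r j : ℕ} (hr : 0 < r) (h : qp (a ^ 2) (a ^ 2) j ≠ 0) :
    (summand r (X : RatFunc K) j).denom.eval₂ f a ≠ 0 := by
  rw [summand_X_eq hr]
  exact eval₂_denom_div_ne_zero (by rw [eval₂_summandDen_X]; exact pow_ne_zero _ h)

lemma eval_summand_X {r j : ℕ} (hr : 0 < r) (h : qp (a ^ 2) (a ^ 2) j ≠ 0) :
    eval f a (summand r (X : RatFunc K) j) = summand r a j := by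
  rw [summand_X_eq hr, eval_div_algebraMap (by rw [eval₂_summandDen_X]; exact pow_ne_zero _ h),
    ← coe_eval₂RingHom, map_summandNum, map_summandDen, coe_eval₂RingHom, eval₂_X,
    summand_eq_summandNum_div_summandDen hr]

lemma cyclotomic_dvd_num_of_eval_eq_zero {L : Type} [Field L] [CharZero L] {n : ℕ} {ζ : L}
    (hζ : IsPrimitiveRoot ζ n) (hn : 0 < n) {x : RatFunc ℚ}
    (hx : x.denom.eval₂ (algebraMap ℚ L) ζ ≠ 0) (h : eval (algebraMap ℚ L) ζ x = 0) :
    cyclotomic n ℚ ∣ x.num := by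
  rw [eval, div_eq_zero_iff, or_iff_left hx] at h
  rw [cyclotomic_eq_minpoly_rat hζ hn]
  exact minpoly.dvd ℚ ζ (by rwa [aeval_def])

lemma cyclotomic_dvd_num_sum_summand_X {ι : Type*} {r n : ℕ} (hr : 0 < r) {ζ : ℂ}
    (hζ : IsPrimitiveRoot ζ n) (hn : Odd n) {s : Finset ι} {g : ι → ℕ}
    (hg : ∀ i ∈ s, g i < n) (h : ∑ i ∈ s, summand r ζ (g i) = 0) :
    cyclotomic n ℚ ∣ (∑ i ∈ s, summand r (X : RatFunc ℚ) (g i)).num := by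
  have hqp {i : ι} (hi : i ∈ s) := hζ.qp_sq_ne_zero hn (hg i hi)
  have hden {i : ι} (hi : i ∈ s) :=
    eval₂_denom_summand_X_ne_zero (f := algebraMap ℚ ℂ) hr (hqp hi)
  refine cyclotomic_dvd_num_of_eval_eq_zero hζ hn.pos
    (eval₂_denom_sum_ne_zero fun i hi => hden hi) ?_
  rwa [eval_sum fun i hi => hden hi, sum_congr rfl fun i hi => eval_summand_X hr (hqp hi)]

end RatFunc

/-- pairing of summands mod `Φ_n(q)` and the congruence
`∑_{k=0}^{M} (-1)^k q^{k^2+(r-2)k} [4k+1] (q;q^2)_k^{2r-1}/(q^2;q^2)_k^{2r-1}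
≡ 0 (mod Φ_n(q))` for `M = n-1` and `M = (n-1)/2`. -/
theorem stmt15 (n r : ℕ) (hn : 1 < n) (hodd : Odd n) (hr : 0 < r) :
    letI q : RatFunc ℚ := RatFunc.X
    letI t : ℕ → RatFunc ℚ := fun j =>
      (-1 : RatFunc ℚ) ^ j * q ^ ((j : ℤ) ^ 2 + ((r : ℤ) - 2) * (j : ℤ)) *
        qint (4 * j + 1) * (qp q (q ^ 2) j) ^ (2 * r - 1) /
        (qp (q ^ 2) (q ^ 2) j) ^ (2 * r - 1)
    (∀ k ≤ (n - 1) / 2,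
        Polynomial.cyclotomic n ℚ ∣ (t k + t ((n - 1) / 2 - k)).num) ∧
    (Polynomial.cyclotomic n ℚ ∣ (∑ k ∈ Finset.range n, t k).num) ∧
    (Polynomial.cyclotomic n ℚ ∣ (∑ k ∈ Finset.range ((n - 1) / 2 + 1), t k).num) := by
  obtain ⟨m, rfl⟩ := hodd
  obtain ⟨ζ, hζ⟩ : ∃ ζ : ℂ, IsPrimitiveRoot ζ (2 * m + 1) :=
    ⟨_, Complex.isPrimitiveRoot_exp _ (by omega)⟩
  have hm : 0 < m := by omega
  have hodd := odd_two_mul_add_one m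
  rw [show (2 * m + 1 - 1) / 2 = m by omega]
  refine ⟨fun k hk => ?_, ?_, ?_⟩
  · have hkm : k + (m - k) = m := by omega
    have hpair := RatFunc.cyclotomic_dvd_num_sum_summand_X hr hζ hodd (s := univ)
      (g := ![k, m - k])
      (by simp only [mem_univ, forall_const, Fin.forall_fin_two, Matrix.cons_val_zero,
        Matrix.cons_val_one]; omega)
      (by simpa using IsPrimitiveRoot.summand_add_summand_eq_zero hr (by rwa [hkm]) (by omega))
    rwa [Fin.sum_univ_two, Matrix.cons_val_zero, Matrix.cons_val_one] at hpair
  · exact RatFunc.cyclotomic_dvd_num_sum_summand_X hr hζ hodd (g := fun j => j)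
      (fun j hj => mem_range.mp hj) (hζ.sum_range_two_mul_add_one_summand_eq_zero hr hm)
  · exact RatFunc.cyclotomic_dvd_num_sum_summand_X hr hζ hodd (g := fun j => j)
      (fun j hj => by have := mem_range.mp hj; omega) (hζ.sum_range_summand_eq_zero hr hm)
end

section
/- For the continuous q-ultraspherical polynomials C_n(x; beta | q) = sum_{k=0}^{n} (beta;q)_k (beta;q)_{n-k}/((q;q)_k (q;q)_{n-k}) * e^{i(n-2k)theta} with x = cos theta, Rogers' linearization formula holds: C_m(x;beta|q) C_n(x;beta|q) = sum_{k=0}^{min(m,n)} ((q;q)_{m+n-2k}(beta;q)_{m-k}(beta;q)_{n-k}(beta;q)_k(beta^2;q)_{m+n-k}) / ((beta^2;q)_{m+n-2k}(q;q)_{m-k}(q;q)_{n-k}(q;q)_k(q beta;q)_{m+n-k}) * ((1-beta q^{m+n-2k})/(1-beta)) * C_{m+n-2k}(x;beta|q). -/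
open Finset

/-- The `q`-shifted factorial `(a;q)_k` over `ℂ`. -/
noncomputable def qpC (a q : ℂ) (k : ℕ) : ℂ :=
  ∏ j ∈ Finset.range k, (1 - a * q ^ j)

/-- The continuous `q`-ultraspherical polynomial `C_n(x;β|q)` written in the
variable `z = e^{iθ}` (so that `x = cos θ = (z+z⁻¹)/2` and
`e^{i(n-2k)θ} = z^{n-2k}`). -/
noncomputable def Cq (q β z : ℂ) (n : ℕ) : ℂ :=
  ∑ k ∈ Finset.range (n + 1),
    qpC β q k * qpC β q (n - k) / (qpC q q k * qpC q q (n - k)) *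
      z ^ ((n : ℤ) - 2 * (k : ℤ))

/-!
With `w k = (β;q)_k / (q;q)_k` (`ultraWeight`) one has `C_n = ∑_{i+j=n} w_i w_j z^(j-i)`, and comparing
coefficients gives the three-term recurrence
`(1 - β q^(n+1)) (z + z⁻¹) C_(n+1) = (1 - q^(n+2)) C_(n+2) + (1 - β² q^n) C_n`.
Writing `n = m + e`, the formula becomes `C_m C_(m+e) = ∑_{a+k=m} R(a, a+e, k) C_(2a+e)` (`rogersSum`), which
is proved by induction on `m` for all `e` at once. The recurrence expresses `C_(m+2) C_(m+2+e)` through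
`C_(m+1) C_((m+1)+(e+1))` and `C_m C_(m+(e+2))`; expanding these by induction and applying the recurrence
once more to each `(z + z⁻¹) C_(2a+e+1)` reduces the claim to three identities between values of `R`.
These follow from the ratios of `R` under a shift of each of its three arguments.
-/

theorem Finset.Nat.sum_antidiagonal_add_two {M : Type*} [AddCommMonoid M] (f : ℕ × ℕ → M)
    (n : ℕ) :
    ∑ p ∈ antidiagonal (n + 2), f p =
      f (0, n + 2) + f (n + 2, 0) + ∑ p ∈ antidiagonal n, f (p.1 + 1, p.2 + 1) := by
  rw [Finset.Nat.sum_antidiagonal_succ, Finset.Nat.sum_antidiagonal_succ', ← add_assoc]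

theorem qpC_zero (a q : ℂ) : qpC a q 0 = 1 := prod_range_zero _

theorem qpC_succ (a q : ℂ) (k : ℕ) : qpC a q (k + 1) = qpC a q k * (1 - a * q ^ k) :=
  prod_range_succ _ _

theorem qpC_succ' (a q : ℂ) (k : ℕ) : qpC a q (k + 1) = (1 - a) * qpC (a * q) q k := by
  simp only [qpC, prod_range_succ', pow_succ', pow_zero, mul_one, mul_assoc]
  exact mul_comm _ _

theorem qpC_ne_zero_iff {a q : ℂ} {k : ℕ} :
    qpC a q k ≠ 0 ↔ ∀ j < k, 1 - a * q ^ j ≠ 0 := by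
  simp [qpC, prod_ne_zero_iff]

theorem zpow_natCast_succ_sub_natCast_succ {G : Type*} [DivInvMonoid G] (z : G) (i j : ℕ) :
    z ^ (((j + 1 : ℕ) : ℤ) - (i + 1 : ℕ)) = z ^ ((j : ℤ) - i) := by
  push_cast
  rw [add_sub_add_right_eq_sub]

theorem add_inv_mul_zpow_natCast_sub {K : Type*} [Field K] {z : K} (hz : z ≠ 0) (i j : ℕ) :
    (z + z⁻¹) * z ^ ((j : ℤ) - i) =
      z ^ (((j + 1 : ℕ) : ℤ) - i) + z ^ ((j : ℤ) - (i + 1 : ℕ)) := by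
  push_cast
  rw [show (j : ℤ) + 1 - i = j - i + 1 by ring, show (j : ℤ) - (i + 1) = j - i - 1 by ring,
    zpow_add_one₀ hz, zpow_sub_one₀ hz]
  ring

noncomputable def ultraWeight (q β : ℂ) (k : ℕ) : ℂ := qpC β q k / qpC q q k

section

variable {q β z : ℂ}

theorem ultraWeight_zero : ultraWeight q β 0 = 1 := by simp [ultraWeight, qpC_zero]

theorem ultraWeight_succ (k : ℕ) :
    ultraWeight q β (k + 1) = ultraWeight q β k * (1 - β * q ^ k) / (1 - q ^ (k + 1)) := by
  rw [ultraWeight, ultraWeight, qpC_succ, qpC_succ, ← pow_succ', mul_div_mul_comm, mul_div_assoc]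

theorem Cq_eq_sum_antidiagonal (n : ℕ) :
    Cq q β z n = ∑ p ∈ antidiagonal n,
      ultraWeight q β p.1 * ultraWeight q β p.2 * z ^ ((p.2 : ℤ) - p.1) := by
  rw [Finset.Nat.sum_antidiagonal_eq_sum_range_succ
    (fun i j => ultraWeight q β i * ultraWeight q β j * z ^ ((j : ℤ) - i)), Cq]
  refine sum_congr rfl fun k hk => ?_
  have hkn : k ≤ n := Nat.lt_succ_iff.1 (mem_range.1 hk)
  rw [ultraWeight, ultraWeight, mul_div_mul_comm, Nat.cast_sub hkn]
  ring_nf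

theorem Cq_zero : Cq q β z 0 = 1 := by
  simp [Cq, qpC_zero]

theorem Cq_one : Cq q β z 1 = (1 - β) / (1 - q) * (z + z⁻¹) := by
  rw [Cq_eq_sum_antidiagonal, Finset.Nat.sum_antidiagonal_succ]
  simp only [ultraWeight_zero, zero_add, ultraWeight_succ, pow_zero, mul_one, one_mul, pow_one,
    Nat.cast_one, CharP.cast_eq_zero, sub_zero, zpow_ofNat, HasAntidiagonal.antidiagonal_zero,
    Nat.cast_add, sum_singleton, zero_sub, Int.reduceNeg, zpow_neg]
  ring

theorem ultraWeight_recurrence {i j : ℕ} (hi : 1 - q ^ (i + 1) ≠ 0)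
    (hj : 1 - q ^ (j + 1) ≠ 0) :
    (1 - q ^ (i + j + 2)) * (ultraWeight q β (i + 1) * ultraWeight q β (j + 1)) +
        (1 - β ^ 2 * q ^ (i + j)) * (ultraWeight q β i * ultraWeight q β j) =
      (1 - β * q ^ (i + j + 1)) *
        (ultraWeight q β (i + 1) * ultraWeight q β j +
          ultraWeight q β i * ultraWeight q β (j + 1)) := by
  rw [ultraWeight_succ, ultraWeight_succ]
  field_simp
  ring

theorem add_inv_mul_Cq_succ_eq_sum (hz : z ≠ 0) (n : ℕ) :
    (z + z⁻¹) * Cq q β z (n + 1) =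
      ultraWeight q β (n + 1) * (z ^ ((n + 2 : ℕ) : ℤ) + z ^ (-((n + 2 : ℕ) : ℤ))) +
        ∑ p ∈ antidiagonal n, (ultraWeight q β (p.1 + 1) * ultraWeight q β p.2 +
          ultraWeight q β p.1 * ultraWeight q β (p.2 + 1)) * z ^ ((p.2 : ℤ) - p.1) := by
  rw [Cq_eq_sum_antidiagonal, mul_sum]
  simp only [mul_left_comm (z + z⁻¹), add_inv_mul_zpow_natCast_sub hz, mul_add, sum_add_distrib]
  rw [Finset.Nat.sum_antidiagonal_succ, Finset.Nat.sum_antidiagonal_succ']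
  simp only [zpow_natCast_succ_sub_natCast_succ, ultraWeight_zero, mul_one, one_mul]
  rw [add_add_add_comm, ← sum_add_distrib]
  exact congrArg₂ (· + ·) rfl (sum_congr rfl fun p _ => by ring)

theorem Cq_add_two_eq_sum (n : ℕ) :
    Cq q β z (n + 2) =
      ultraWeight q β (n + 2) * (z ^ ((n + 2 : ℕ) : ℤ) + z ^ (-((n + 2 : ℕ) : ℤ))) +
        ∑ p ∈ antidiagonal n, ultraWeight q β (p.1 + 1) * ultraWeight q β (p.2 + 1) *
          z ^ ((p.2 : ℤ) - p.1) := by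
  rw [Cq_eq_sum_antidiagonal, Finset.Nat.sum_antidiagonal_add_two]
  simp only [zpow_natCast_succ_sub_natCast_succ, ultraWeight_zero, mul_one, one_mul, mul_add,
    Nat.cast_zero, sub_zero, zero_sub]

theorem Cq_recurrence (hz : z ≠ 0) {n : ℕ} (hq : qpC q q (n + 2) ≠ 0) :
    (1 - β * q ^ (n + 1)) * ((z + z⁻¹) * Cq q β z (n + 1)) =
      (1 - q ^ (n + 2)) * Cq q β z (n + 2) + (1 - β ^ 2 * q ^ n) * Cq q β z n := by
  have hq' : ∀ i ≤ n + 1, 1 - q ^ (i + 1) ≠ 0 := fun i hi => by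
    simpa [pow_succ'] using qpC_ne_zero_iff.1 hq i (by omega)
  have hcorner : (1 - q ^ (n + 2)) * ultraWeight q β (n + 2) =
      (1 - β * q ^ (n + 1)) * ultraWeight q β (n + 1) := by
    rw [ultraWeight_succ]
    field_simp [hq' (n + 1) le_rfl]
  rw [add_inv_mul_Cq_succ_eq_sum hz, Cq_add_two_eq_sum, Cq_eq_sum_antidiagonal (n := n),
    mul_add (1 - β * q ^ (n + 1)), mul_add (1 - q ^ (n + 2)), ← mul_assoc (1 - β * q ^ (n + 1)),
    ← mul_assoc (1 - q ^ (n + 2)), hcorner, add_assoc, mul_sum, mul_sum, mul_sum,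
    ← sum_add_distrib]
  refine congrArg₂ (· + ·) rfl (sum_congr rfl fun p hp => ?_)
  rw [HasAntidiagonal.mem_antidiagonal] at hp
  rw [← hp]
  linear_combination z ^ ((p.2 : ℤ) - p.1) *
    (ultraWeight_recurrence (β := β) (hq' p.1 (by omega)) (hq' p.2 (by omega))).symm

theorem add_inv_mul_Cq_succ {n : ℕ} (hz : z ≠ 0) (hq : qpC q q (n + 2) ≠ 0)
    (hβ : 1 - β * q ^ (n + 1) ≠ 0) :
    (z + z⁻¹) * Cq q β z (n + 1) =
      ((1 - q ^ (n + 2)) * Cq q β z (n + 2) + (1 - β ^ 2 * q ^ n) * Cq q β z n) /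
        (1 - β * q ^ (n + 1)) := by
  rw [eq_div_iff hβ, mul_comm]
  exact Cq_recurrence hz hq

end

structure RogersAdmissible (q β : ℂ) (N : ℕ) : Prop where
  one_sub_ne_zero : 1 - β ≠ 0
  qpC_q_ne_zero : ∀ k ≤ N, qpC q q k ≠ 0
  qpC_sq_ne_zero : ∀ k ≤ N, qpC (β ^ 2) q k ≠ 0
  qpC_mul_ne_zero : ∀ k ≤ N, qpC (β * q) q k ≠ 0

namespace RogersAdmissible

variable {q β : ℂ} {N : ℕ}

theorem mono {M : ℕ} (h : RogersAdmissible q β N) (hMN : M ≤ N) : RogersAdmissible q β M :=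
  ⟨h.1, fun k hk => h.2 k (hk.trans hMN), fun k hk => h.3 k (hk.trans hMN),
    fun k hk => h.4 k (hk.trans hMN)⟩

theorem one_sub_pow_succ_ne_zero (h : RogersAdmissible q β N) {s : ℕ} (hs : s < N) :
    1 - q ^ (s + 1) ≠ 0 := by
  simpa [pow_succ'] using qpC_ne_zero_iff.1 (h.qpC_q_ne_zero (s + 1) hs) s (by omega)

theorem one_sub_mul_pow_ne_zero (h : RogersAdmissible q β N) {s : ℕ} (hs : s ≤ N) :
    1 - β * q ^ s ≠ 0 := by
  cases s with
  | zero => simpa using h.one_sub_ne_zero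
  | succ s =>
    simpa [pow_succ', mul_assoc] using
      qpC_ne_zero_iff.1 (h.qpC_mul_ne_zero (s + 1) hs) s (by omega)

theorem one_sub_sq_mul_pow_ne_zero (h : RogersAdmissible q β N) {s : ℕ} (hs : s < N) :
    1 - β ^ 2 * q ^ s ≠ 0 :=
  qpC_ne_zero_iff.1 (h.qpC_sq_ne_zero (s + 1) hs) s (by omega)

end RogersAdmissible

-- `R(a, b, k)`: the coefficient of `C_(a+b)` in `C_(a+k) C_(b+k)`, i.e. the `k`-th summand of the
-- theorem with `a = m - k`, `b = n - k`.
noncomputable def rogersCoeff (q β : ℂ) (a b k : ℕ) : ℂ :=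
  qpC q q (a + b) * qpC β q a * qpC β q b * qpC β q k * qpC (β ^ 2) q (a + b + k) /
      (qpC (β ^ 2) q (a + b) * qpC q q a * qpC q q b * qpC q q k * qpC (β * q) q (a + b + k)) *
    ((1 - β * q ^ (a + b)) / (1 - β))

section

variable {q β z : ℂ}

theorem rogersCoeff_comm (a b k : ℕ) : rogersCoeff q β a b k = rogersCoeff q β b a k := by
  simp only [rogersCoeff, add_comm b a]
  ring

theorem rogersCoeff_zero_left_zero_third {b : ℕ} (h : RogersAdmissible q β b) :
    rogersCoeff q β 0 b 0 = 1 := by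
  have := h.one_sub_ne_zero
  have := h.qpC_q_ne_zero b le_rfl
  have := h.qpC_sq_ne_zero b le_rfl
  have := h.qpC_mul_ne_zero b le_rfl
  simp only [rogersCoeff, zero_add, qpC_zero, mul_one, add_zero]
  field_simp
  rw [← qpC_succ, qpC_succ', mul_comm]

theorem rogersCoeff_succ_left {a b k : ℕ} (h : RogersAdmissible q β (a + b + k + 1)) :
    rogersCoeff q β (a + 1) b k = rogersCoeff q β a b k *
      ((1 - q ^ (a + b + 1)) * (1 - β * q ^ a) * (1 - β ^ 2 * q ^ (a + b + k)) *
        (1 - β * q ^ (a + b + 1))) /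
      ((1 - β ^ 2 * q ^ (a + b)) * (1 - q ^ (a + 1)) * (1 - β * q ^ (a + b + k + 1)) *
        (1 - β * q ^ (a + b))) := by
  have := h.one_sub_ne_zero
  have := h.qpC_q_ne_zero a (by omega)
  have := h.qpC_q_ne_zero b (by omega)
  have := h.qpC_q_ne_zero k (by omega)
  have := h.qpC_sq_ne_zero (a + b) (by omega)
  have := h.qpC_mul_ne_zero (a + b + k) (by omega)
  have := h.one_sub_pow_succ_ne_zero (s := a) (by omega)
  have := h.one_sub_sq_mul_pow_ne_zero (s := a + b) (by omega)
  have := h.one_sub_mul_pow_ne_zero (s := a + b) (by omega)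
  have := h.one_sub_mul_pow_ne_zero (s := a + b + k + 1) le_rfl
  rw [rogersCoeff, rogersCoeff, show a + 1 + b = a + b + 1 by ring,
    show a + b + 1 + k = a + b + k + 1 by ring]
  simp only [qpC_succ, ← pow_succ', mul_assoc]
  field_simp

theorem rogersCoeff_succ_third {a b k : ℕ} (h : RogersAdmissible q β (a + b + k + 1)) :
    rogersCoeff q β a b (k + 1) = rogersCoeff q β a b k *
      ((1 - β * q ^ k) * (1 - β ^ 2 * q ^ (a + b + k))) /
      ((1 - q ^ (k + 1)) * (1 - β * q ^ (a + b + k + 1))) := by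
  have := h.one_sub_ne_zero
  have := h.qpC_q_ne_zero a (by omega)
  have := h.qpC_q_ne_zero b (by omega)
  have := h.qpC_q_ne_zero k (by omega)
  have := h.qpC_sq_ne_zero (a + b) (by omega)
  have := h.qpC_mul_ne_zero (a + b + k) (by omega)
  have := h.one_sub_pow_succ_ne_zero (s := k) (by omega)
  have := h.one_sub_mul_pow_ne_zero (s := a + b + k + 1) le_rfl
  rw [rogersCoeff, rogersCoeff, ← add_assoc]
  simp only [qpC_succ, ← pow_succ', mul_assoc]
  field_simp

theorem rogersCoeff_succ_right {a b k : ℕ} (h : RogersAdmissible q β (a + b + k + 1)) :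
    rogersCoeff q β a (b + 1) k = rogersCoeff q β a b k *
      ((1 - q ^ (a + b + 1)) * (1 - β * q ^ b) * (1 - β ^ 2 * q ^ (a + b + k)) *
        (1 - β * q ^ (a + b + 1))) /
      ((1 - β ^ 2 * q ^ (a + b)) * (1 - q ^ (b + 1)) * (1 - β * q ^ (a + b + k + 1)) *
        (1 - β * q ^ (a + b))) := by
  rw [rogersCoeff_comm, rogersCoeff_succ_left (by rwa [add_comm b a]), rogersCoeff_comm b,
    add_comm b a]

theorem rogersCoeff_step_top {j b : ℕ} (h : RogersAdmissible q β (j + b + 1)) :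
    (1 - q ^ (j + 1)) * rogersCoeff q β (j + 1) b 0 =
      (1 - β * q ^ j) * rogersCoeff q β j b 0 * (1 - q ^ (j + b + 1)) /
        (1 - β * q ^ (j + b)) := by
  have := h.one_sub_pow_succ_ne_zero (s := j) (by omega)
  have := h.one_sub_sq_mul_pow_ne_zero (s := j + b) (by omega)
  have := h.one_sub_mul_pow_ne_zero (s := j + b) (by omega)
  have := h.one_sub_mul_pow_ne_zero (s := j + b + 1) le_rfl
  rw [rogersCoeff_succ_left h, add_zero, mul_div_assoc', div_eq_div_iff (by simp [*]) (by simp [*])]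
  ring

theorem rogersCoeff_step_bottom {j b : ℕ} (h : RogersAdmissible q β (j + b + 2)) :
    (1 - q ^ (j + 1)) * rogersCoeff q β 0 b (j + 1) =
      (1 - β * q ^ j) * rogersCoeff q β 0 (b + 1) j * (1 - β ^ 2 * q ^ b) /
        (1 - β * q ^ (b + 1)) := by
  have := h.one_sub_pow_succ_ne_zero (s := j) (by omega)
  have := h.one_sub_pow_succ_ne_zero (s := b) (by omega)
  have := h.one_sub_sq_mul_pow_ne_zero (s := b) (by omega)
  have := h.one_sub_mul_pow_ne_zero (s := b) (by omega)
  have := h.one_sub_mul_pow_ne_zero (s := b + 1) (by omega)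
  have := h.one_sub_mul_pow_ne_zero (s := b + j + 1) (by omega)
  rw [rogersCoeff_succ_third (h.mono (by omega)), rogersCoeff_succ_right (h.mono (by omega))]
  simp only [zero_add]
  field_simp

theorem rogersCoeff_step_mid {a b k : ℕ} (h : RogersAdmissible q β (a + b + k + 3)) :
    (1 - q ^ (a + k + 2)) * rogersCoeff q β (a + 1) (b + 1) (k + 1) =
      (1 - β * q ^ (a + k + 1)) *
          (rogersCoeff q β a (b + 1) (k + 1) * (1 - q ^ (a + b + 2)) / (1 - β * q ^ (a + b + 1)) +
            rogersCoeff q β (a + 1) (b + 2) k * (1 - β ^ 2 * q ^ (a + b + 2)) /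
              (1 - β * q ^ (a + b + 3))) -
        (1 - β ^ 2 * q ^ (a + k)) * rogersCoeff q β a (b + 2) k := by
  rw [rogersCoeff_succ_left (a := a) (b := b + 1) (k := k + 1) (h.mono (by omega)),
    rogersCoeff_succ_left (a := a) (b := b + 2) (k := k) (h.mono (by omega)),
    rogersCoeff_succ_third (a := a) (b := b + 1) (k := k) (h.mono (by omega)),
    rogersCoeff_succ_right (a := a) (b := b + 1) (k := k) (h.mono (by omega))]
  have := h.one_sub_pow_succ_ne_zero (s := a) (by omega)
  have := h.one_sub_pow_succ_ne_zero (s := k) (by omega)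
  have := h.one_sub_pow_succ_ne_zero (s := b + 1) (by omega)
  have := h.one_sub_sq_mul_pow_ne_zero (s := a + b + 1) (by omega)
  have := h.one_sub_sq_mul_pow_ne_zero (s := a + b + 2) (by omega)
  have := h.one_sub_mul_pow_ne_zero (s := a + b + 1) (by omega)
  have := h.one_sub_mul_pow_ne_zero (s := a + b + 2) (by omega)
  have := h.one_sub_mul_pow_ne_zero (s := a + b + 3) (by omega)
  have := h.one_sub_mul_pow_ne_zero (s := a + b + k + 2) (by omega)
  have := h.one_sub_mul_pow_ne_zero (s := a + b + k + 3) (by omega)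
  -- Put every exponent in one normal form, so that `field_simp` cancels the common factors.
  simp only [← add_assoc, add_right_comm _ 1 k]
  simp only [add_assoc, Nat.reduceAdd] at *
  field_simp
  ring

end

noncomputable def rogersSum (q β z : ℂ) (m e : ℕ) : ℂ :=
  ∑ p ∈ antidiagonal m, rogersCoeff q β p.1 (p.1 + e) p.2 * Cq q β z (2 * p.1 + e)

section

variable {q β z : ℂ}

theorem rogersSum_zero {e : ℕ} (h : RogersAdmissible q β e) :
    rogersSum q β z 0 e = Cq q β z e := by
  simp [rogersSum, rogersCoeff_zero_left_zero_third h]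

theorem rogersSum_one (hz : z ≠ 0) {e : ℕ} (h : RogersAdmissible q β (e + 2)) :
    (1 - q) * rogersSum q β z 1 e = (1 - β) * ((z + z⁻¹) * rogersSum q β z 0 (e + 1)) := by
  have htop := rogersCoeff_step_top (j := 0) (b := e + 1) (h.mono (by omega))
  have hbottom := rogersCoeff_step_bottom (j := 0) (b := e) (h.mono (by omega))
  simp only [zero_add, pow_zero, mul_one, pow_one, rogersCoeff_zero_left_zero_third
    (h.mono (by omega) : RogersAdmissible q β (e + 1))] at htop hbottom
  rw [rogersSum_zero (h.mono (by omega)), add_inv_mul_Cq_succ hz (h.qpC_q_ne_zero _ le_rfl)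
    (h.one_sub_mul_pow_ne_zero (by omega)), rogersSum, Finset.Nat.sum_antidiagonal_succ]
  simp only [HasAntidiagonal.antidiagonal_zero, sum_singleton, zero_add, mul_zero, mul_one]
  rw [show 2 + e = e + 2 by ring, show 1 + e = e + 1 by ring, mul_add, ← mul_assoc, ← mul_assoc,
    hbottom, htop]
  ring

theorem add_inv_mul_rogersSum (hz : z ≠ 0) {m e : ℕ}
    (h : RogersAdmissible q β (2 * m + e + 4)) :
    (z + z⁻¹) * rogersSum q β z (m + 1) (e + 1) =
      ∑ p ∈ antidiagonal (m + 1), rogersCoeff q β p.1 (p.1 + (e + 1)) p.2 *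
          (1 - q ^ (2 * p.1 + e + 2)) / (1 - β * q ^ (2 * p.1 + e + 1)) *
            Cq q β z (2 * p.1 + e + 2) +
        ∑ p ∈ antidiagonal (m + 1), rogersCoeff q β p.1 (p.1 + (e + 1)) p.2 *
          (1 - β ^ 2 * q ^ (2 * p.1 + e)) / (1 - β * q ^ (2 * p.1 + e + 1)) *
            Cq q β z (2 * p.1 + e) := by
  rw [rogersSum, mul_sum, ← sum_add_distrib]
  refine sum_congr rfl fun p hp => ?_
  have hp1 : p.1 ≤ m + 1 := by rw [HasAntidiagonal.mem_antidiagonal] at hp; omega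
  rw [mul_left_comm (z + z⁻¹), show (z + z⁻¹) * Cq q β z (2 * p.1 + (e + 1)) = _ from
    add_inv_mul_Cq_succ (n := 2 * p.1 + e) hz (h.qpC_q_ne_zero _ (by omega))
      (h.one_sub_mul_pow_ne_zero (by omega))]
  ring

theorem rogersSum_step (hz : z ≠ 0) {m e : ℕ} (h : RogersAdmissible q β (2 * m + e + 4)) :
    (1 - q ^ (m + 2)) * rogersSum q β z (m + 2) e =
      (1 - β * q ^ (m + 1)) * ((z + z⁻¹) * rogersSum q β z (m + 1) (e + 1)) -
        (1 - β ^ 2 * q ^ m) * rogersSum q β z m (e + 2) := by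
  have hbottom : (1 - q ^ (m + 2)) * (rogersCoeff q β 0 (0 + e) (m + 2) * Cq q β z (2 * 0 + e)) =
      (1 - β * q ^ (m + 1)) * (rogersCoeff q β 0 (0 + (e + 1)) (m + 1) *
        (1 - β ^ 2 * q ^ (2 * 0 + e)) / (1 - β * q ^ (2 * 0 + e + 1)) *
          Cq q β z (2 * 0 + e)) := by
    simp only [zero_add, mul_zero]
    rw [← mul_assoc, rogersCoeff_step_bottom (h.mono (by omega))]
    ring
  have htop : (1 - q ^ (m + 2)) *
      (rogersCoeff q β (m + 2) (m + 2 + e) 0 * Cq q β z (2 * (m + 2) + e)) =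
      (1 - β * q ^ (m + 1)) * (rogersCoeff q β (m + 1) (m + 1 + (e + 1)) 0 *
        (1 - q ^ (2 * (m + 1) + e + 2)) / (1 - β * q ^ (2 * (m + 1) + e + 1)) *
          Cq q β z (2 * (m + 1) + e + 2)) := by
    rw [show m + 1 + (e + 1) = m + 2 + e by omega,
      show 2 * (m + 1) + e + 2 = m + 1 + (m + 2 + e) + 1 by omega,
      show 2 * (m + 1) + e + 1 = m + 1 + (m + 2 + e) by omega,
      show 2 * (m + 2) + e = m + 1 + (m + 2 + e) + 1 by omega,
      ← mul_assoc, rogersCoeff_step_top (h.mono (by omega))]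
    ring
  rw [add_inv_mul_rogersSum hz h, rogersSum, rogersSum,
    Finset.Nat.sum_antidiagonal_add_two, Finset.Nat.sum_antidiagonal_succ',
    Finset.Nat.sum_antidiagonal_succ, mul_add (1 - q ^ (m + 2)), mul_add (1 - q ^ (m + 2)), hbottom,
    htop, mul_add (1 - β * q ^ (m + 1)), mul_add (1 - β * q ^ (m + 1)),
    mul_add (1 - β * q ^ (m + 1)), mul_sum, mul_sum, mul_sum, mul_sum,
    add_add_add_comm (G := ℂ), add_sub_assoc, ← sum_add_distrib, ← sum_sub_distrib]
  refine congrArg₂ (· + ·) (add_comm _ _) (sum_congr rfl fun ⟨a, k⟩ hp => ?_)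
  rw [HasAntidiagonal.mem_antidiagonal] at hp
  subst hp
  dsimp only
  have key := rogersCoeff_step_mid (a := a) (b := a + e) (k := k) (h.mono (by omega))
  rw [show 2 * a + e + 2 = 2 * (a + 1) + e by ring, show 2 * a + (e + 2) = 2 * (a + 1) + e by ring,
    show a + 1 + e = a + e + 1 by ring, show a + (e + 1) = a + e + 1 by ring,
    show a + 1 + (e + 1) = a + e + 2 by ring, show a + (e + 2) = a + e + 2 by ring]
  linear_combination Cq q β z (2 * (a + 1) + e) * key

theorem Cq_mul_Cq_add (hz : z ≠ 0) :
    ∀ m e : ℕ, RogersAdmissible q β (2 * m + e) →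
      Cq q β z m * Cq q β z (m + e) = rogersSum q β z m e
  | 0, e, h => by rw [Cq_zero, one_mul, zero_add, rogersSum_zero (h.mono (by omega))]
  | 1, e, h => by
    have h1q : (1 : ℂ) - q ≠ 0 := by simpa using h.one_sub_pow_succ_ne_zero (s := 0) (by omega)
    refine mul_left_cancel₀ h1q ?_
    rw [rogersSum_one hz (h.mono (by omega)), rogersSum_zero (h.mono (by omega)), Cq_one,
      add_comm 1 e]
    field_simp
  | m + 2, e, h => by
    refine mul_left_cancel₀ (h.one_sub_pow_succ_ne_zero (s := m + 1) (by omega)) ?_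
    have ih₁ := Cq_mul_Cq_add hz (m + 1) (e + 1) (h.mono (by omega))
    have ih₀ := Cq_mul_Cq_add hz m (e + 2) (h.mono (by omega))
    rw [show m + 1 + (e + 1) = m + 2 + e by omega] at ih₁
    rw [show m + (e + 2) = m + 2 + e by omega] at ih₀
    rw [rogersSum_step hz (h.mono (by omega)), ← ih₁, ← ih₀]
    linear_combination (-Cq q β z (m + 2 + e)) *
      Cq_recurrence (β := β) hz (h.qpC_q_ne_zero (m + 2) (by omega))

theorem Cq_mul_Cq (hz : z ≠ 0) {m n : ℕ} (h : RogersAdmissible q β (m + n)) :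
    Cq q β z m * Cq q β z n = ∑ k ∈ range (min m n + 1),
      rogersCoeff q β (m - k) (n - k) k * Cq q β z (m + n - 2 * k) := by
  wlog hmn : m ≤ n generalizing m n
  · rw [mul_comm, this (by rwa [add_comm]) (by omega), min_comm, add_comm n m]
    exact sum_congr rfl fun k _ => by rw [rogersCoeff_comm]
  obtain ⟨e, rfl⟩ := Nat.exists_eq_add_of_le hmn
  rw [Cq_mul_Cq_add hz m e (h.mono (by omega)), rogersSum, ← Finset.Nat.sum_antidiagonal_swap,
    Finset.Nat.sum_antidiagonal_eq_sum_range_succ_mk, min_eq_left hmn]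
  refine sum_congr rfl fun k hk => ?_
  have hkm : k ≤ m := Nat.lt_succ_iff.1 (mem_range.1 hk)
  dsimp only [Prod.swap]
  rw [show m - k + e = m + e - k by omega, show 2 * (m - k) + e = m + (m + e) - 2 * k by omega]

end

/-- Rogers' linearization formula for the continuous
`q`-ultraspherical polynomials. -/
theorem stmt18 (q β z : ℂ) (m n : ℕ) (hz : z ≠ 0)
    (hq : ∀ k, k ≤ m + n → qpC q q k ≠ 0)
    (hβ : (1 : ℂ) - β ≠ 0)
    (hβ2 : ∀ k, k ≤ m + n → qpC (β ^ 2) q k ≠ 0)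
    (hβq : ∀ k, k ≤ m + n → qpC (β * q) q k ≠ 0) :
    Cq q β z m * Cq q β z n =
      ∑ k ∈ Finset.range (min m n + 1),
        qpC q q (m + n - 2 * k) * qpC β q (m - k) * qpC β q (n - k) * qpC β q k *
            qpC (β ^ 2) q (m + n - k) /
          (qpC (β ^ 2) q (m + n - 2 * k) * qpC q q (m - k) * qpC q q (n - k) *
            qpC q q k * qpC (β * q) q (m + n - k)) *
          ((1 - β * q ^ (m + n - 2 * k)) / (1 - β)) * Cq q β z (m + n - 2 * k) := by
  rw [Cq_mul_Cq hz ⟨hβ, hq, hβ2, hβq⟩]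
  refine sum_congr rfl fun k hk => ?_
  have hk' : k ≤ min m n := Nat.lt_succ_iff.1 (mem_range.1 hk)
  rw [rogersCoeff, show m - k + (n - k) + k = m + n - k by omega,
    show m - k + (n - k) = m + n - 2 * k by omega]
end
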